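/- arXiv:1402.5430 — 10 statements merged into one kernel-verified Lean document; each statement's English description precedes it below -/
import Mathlib

section
/- Let f(X) = a_0 X^n + a_1 X^{n-1} + ... + a_{n-1} X + a_n ∈ ℤ[X] with n ≥ 2, a_0 ≠ 0 and a_{n-1} ≠ 0, and let η ≠ 1 be a complex number. Then f(X) ≠ f(ηX), and for fixed a_0, ..., a_{n-1}, the resultant Res(f(X), f(ηX)), viewed as a polynomial in the variable a_n, is not identically zero and has degree at most n in a_n. -/
/-!
Write `f = g + t` with `g(0) = 0`, and put `q(X) = g(ηX) - g(X)`, which does not depend on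
`t` and is nonzero because its linear coefficient is `a_{n-1}(η - 1)`. At every root `α` of
`f` we have `f(ηα) = q(α)`, so `Res(f(X), f(ηX))` is, up to a nonzero constant, `∏_α q(α)`.
Swapping the roles of `f` and `q` turns this into `∏_β f(β) = ∏_β (t + g(β))`, the product
running over the at most `n` roots `β` of `q`: a monic polynomial in `t` of degree at most `n`.
-/

open Polynomial Finset

/-- The resultant of two complex polynomials (Poisson product formula, which agrees with
the Sylvester-matrix resultant over `ℂ`):
`Res(g, h) = lc(g)^{deg h} · ∏_{g(α)=0} h(α)`. -/
noncomputable def res (g h : Polynomial ℂ) : ℂ :=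
  g.leadingCoeff ^ h.natDegree * (g.roots.map fun α => h.eval α).prod

theorem leadingCoeff_add_C {R : Type*} [Semiring R] {p : R[X]} (hp : 0 < p.natDegree) (a : R) :
    (p + C a).leadingCoeff = p.leadingCoeff := by
  rw [leadingCoeff, natDegree_add_C, coeff_add, coeff_C, if_neg hp.ne', add_zero, leadingCoeff]

theorem coeff_sum_range_C_mul_X_pow_sub {R : Type*} [Semiring R] (c : ℕ → R) {n m : ℕ}
    (hm0 : 0 < m) (hmn : m ≤ n) :
    (∑ j ∈ range n, C (c j) * X ^ (n - j)).coeff m = c (n - m) := by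
  simp only [finsetSum_coeff, coeff_C_mul, coeff_X_pow]
  rw [Finset.sum_eq_single (n - m)]
  · simp [Nat.sub_sub_self hmn]
  · intro j hj hne
    rw [if_neg (by simp only [mem_range] at hj; omega), mul_zero]
  · intro h
    exact absurd (mem_range.mpr (by omega)) h

theorem natDegree_sum_range_C_mul_X_pow_sub_le {R : Type*} [Semiring R] (c : ℕ → R) (n : ℕ) :
    (∑ j ∈ range n, C (c j) * X ^ (n - j)).natDegree ≤ n :=
  natDegree_sum_le_of_forall_le _ _ fun j _ =>
    (natDegree_C_mul_X_pow_le _ _).trans (Nat.sub_le n j)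

theorem comp_C_mul_X_ne_self {R : Type*} [CommRing R] [IsDomain R] {p : R[X]} {η : R}
    (hp : p.coeff 1 ≠ 0) (hη : η ≠ 1) : p.comp (C η * X) ≠ p := fun h =>
  hη <| (mul_eq_left₀ hp).mp <| by simpa using congrArg (coeff · 1) h

theorem natDegree_comp_C_mul_X_sub_le {R : Type*} [CommRing R] (p : R[X]) (η : R) :
    (p.comp (C η * X) - p).natDegree ≤ p.natDegree := by
  have hηX : (C η * X).natDegree ≤ 1 := (natDegree_C_mul_le _ _).trans natDegree_X_le
  refine (natDegree_sub_le_of_le (natDegree_comp_le.trans ?_) le_rfl).trans (max_self _).le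
  simpa using Nat.mul_le_mul_left p.natDegree hηX

theorem leadingCoeff_pow_mul_prod_roots_map_eval_comm {R : Type*} [CommRing R] [IsDomain R]
    {f g : R[X]} (hf : f.Splits) (hg : g.Splits) :
    f.leadingCoeff ^ g.natDegree * (f.roots.map g.eval).prod =
      (-1) ^ (f.natDegree * g.natDegree) *
        (g.leadingCoeff ^ f.natDegree * (g.roots.map f.eval).prod) := by
  rw [← resultant_eq_prod_eval f g _ le_rfl hf, ← resultant_eq_prod_eval g f _ le_rfl hg,
    resultant_comm]

theorem exists_monic_eval_eq_prod_map_eval_add_C {R : Type*} [CommRing R] [Nontrivial R]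
    (p : R[X]) (s : Multiset R) :
    ∃ P : R[X], P.Monic ∧ P.natDegree = Multiset.card s ∧
      ∀ t, P.eval t = (s.map fun β => (p + C t).eval β).prod := by
  refine ⟨((s.map fun β => -p.eval β).map (X - C ·)).prod,
    monic_multiset_prod_of_monic _ _ fun _ _ => monic_X_sub_C _,
    by rw [natDegree_multiset_prod_X_sub_C_eq_card, Multiset.card_map], fun t => ?_⟩
  rw [eval_multiset_prod, Multiset.map_map, Multiset.map_map]
  congr 1
  refine Multiset.map_congr rfl fun β _ => ?_
  simp [add_comm]

theorem exists_eval_eq_res_add_C_comp (g r : ℂ[X]) (hgr : g.comp r ≠ g) :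
    ∃ P : ℂ[X], P ≠ 0 ∧ P.natDegree ≤ (g.comp r - g).natDegree ∧
      ∀ t : ℂ, res (g + C t) ((g + C t).comp r) = P.eval t := by
  set q := g.comp r - g with hq
  have hg : 0 < g.natDegree := by
    by_contra! h
    exact hgr (by rw [eq_C_of_natDegree_eq_zero (Nat.le_zero.mp h), C_comp])
  have hlc : g.leadingCoeff ≠ 0 := leadingCoeff_ne_zero.mpr (ne_zero_of_natDegree_gt hg)
  have hrootEval :
      ∀ t, ∀ α ∈ (g + C t).roots, ((g + C t).comp r).eval α = q.eval α := by
    intro t α hα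
    have hroot : g.eval α + t = 0 := by simpa using isRoot_of_mem_roots hα
    simp only [hq, add_comp, C_comp, eval_add, eval_sub, eval_C]
    linear_combination hroot
  obtain ⟨P, hPm, hPdeg, hPeval⟩ := exists_monic_eval_eq_prod_map_eval_add_C g q.roots
  refine ⟨C (g.leadingCoeff ^ (g.natDegree * r.natDegree) * (-1) ^ (g.natDegree * q.natDegree) *
    q.leadingCoeff ^ g.natDegree / g.leadingCoeff ^ q.natDegree) * P, ?_, ?_, fun t => ?_⟩
  · have hqlc : q.leadingCoeff ≠ 0 := leadingCoeff_ne_zero.mpr (sub_ne_zero.mpr hgr)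
    exact mul_ne_zero (C_ne_zero.mpr (by simp [hlc, hqlc])) hPm.ne_zero
  · exact (natDegree_C_mul_le _ _).trans (hPdeg ▸ card_roots' q)
  · have hswap := leadingCoeff_pow_mul_prod_roots_map_eval_comm
      (IsAlgClosed.splits (g + C t)) (IsAlgClosed.splits q)
    rw [leadingCoeff_add_C hg, natDegree_add_C] at hswap
    rw [res, leadingCoeff_add_C hg, natDegree_comp, natDegree_add_C,
      Multiset.map_congr rfl (hrootEval t), eval_mul, eval_C, hPeval]
    field_simp
    linear_combination hswap

theorem resultant_nonzero_poly_in_const_coeff_general (n : ℕ) (hn : 2 ≤ n) (a : ℕ → ℤ)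
    (han1 : a (n - 1) ≠ 0) (η : ℂ) (hη : η ≠ 1)
    (F : ℤ → Polynomial ℂ)
    (hF : ∀ t : ℤ, F t = (∑ j ∈ Finset.range n, C ((a j : ℂ)) * X ^ (n - j)) + C (t : ℂ)) :
    (∀ t : ℤ, F t ≠ (F t).comp (C η * X)) ∧
    ∃ P : Polynomial ℂ, P ≠ 0 ∧ P.natDegree ≤ n ∧
      ∀ t : ℤ, res (F t) ((F t).comp (C η * X)) = P.eval (t : ℂ) := by
  set g : ℂ[X] := ∑ j ∈ range n, C (a j : ℂ) * X ^ (n - j)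
  have hg1 : g.coeff 1 ≠ 0 := by
    rw [coeff_sum_range_C_mul_X_pow_sub _ one_pos (by omega)]
    exact_mod_cast han1
  have hgη : g.comp (C η * X) ≠ g := comp_C_mul_X_ne_self hg1 hη
  refine ⟨fun t h => hgη ?_, ?_⟩
  · rw [hF, add_comp, C_comp] at h
    exact (add_right_cancel h).symm
  obtain ⟨P, hP0, hPdeg, hPeval⟩ := exists_eval_eq_res_add_C_comp g (C η * X) hgη
  refine ⟨P, hP0, ?_, fun t => by rw [hF, hPeval]⟩
  exact hPdeg.trans ((natDegree_comp_C_mul_X_sub_le g η).trans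
    (natDegree_sum_range_C_mul_X_pow_sub_le _ n))

/-- For `f(X) = a₀Xⁿ + ⋯ + a_{n-1}X + aₙ ∈ ℤ[X]` with `n ≥ 2`, `a₀ ≠ 0`, `a_{n-1} ≠ 0`,
and `η ≠ 1` a complex number: `f(X) ≠ f(ηX)`, and for fixed `a₀, …, a_{n-1}` the resultant
`Res(f(X), f(ηX))`, as a function of `aₙ`, is given by a nonzero polynomial of degree at
most `n`. -/
theorem resultant_nonzero_poly_in_const_coeff (n : ℕ) (hn : 2 ≤ n) (a : ℕ → ℤ)
    (ha0 : a 0 ≠ 0) (han1 : a (n - 1) ≠ 0) (η : ℂ) (hη : η ≠ 1)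
    (F : ℤ → Polynomial ℂ)
    (hF : ∀ t : ℤ, F t = (∑ j ∈ Finset.range n, C ((a j : ℂ)) * X ^ (n - j)) + C (t : ℂ)) :
    (∀ t : ℤ, F t ≠ (F t).comp (C η * X)) ∧
    ∃ P : Polynomial ℂ, P ≠ 0 ∧ P.natDegree ≤ n ∧
      ∀ t : ℤ, res (F t) ((F t).comp (C η * X)) = P.eval (t : ℂ) :=
  resultant_nonzero_poly_in_const_coeff_general n hn a han1 η hη F hF
end

section
/- For every integer H ≥ 1, the number of reducible monic degenerate polynomials X^2 + a_1 X + a_2 ∈ ℤ[X] with |a_1|, |a_2| ≤ H equals ⌊√H⌋. -/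
/-!
A monic integer quadratic that is reducible over `ℚ` factors as `(X + c) * (X + d)` over `ℤ`
(Gauss). A root-of-unity quotient of its roots `-c`, `-d` forces `|c| = |d|`, and distinctness
then forces `d = -c ≠ 0`; so the polynomials counted are exactly `X² - n²` with `1 ≤ n ≤ √H`.
-/

open Polynomial Finset
open scoped Classical

/-- A polynomial `f ∈ ℤ[X]` is degenerate if it has two distinct complex roots whose
quotient is a root of unity. -/
def IsDegenerate (f : Polynomial ℤ) : Prop :=
  ∃ α β : ℂ, (Polynomial.aeval α f = 0) ∧ (Polynomial.aeval β f = 0) ∧ α ≠ β ∧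
    ∃ k : ℕ, 0 < k ∧ (α / β) ^ k = 1

theorem aeval_X_add_C_mul_X_add_C_eq_zero_iff {A : Type*} [CommRing A] [IsDomain A]
    (c d : ℤ) (x : A) : aeval x ((X + C c) * (X + C d)) = 0 ↔ x = -c ∨ x = -d := by
  simp only [map_mul, map_add, aeval_X, eq_intCast, map_intCast, mul_eq_zero,
    add_eq_zero_iff_eq_neg]

theorem norm_eq_norm_of_div_pow_eq_one {α β : ℂ} {k : ℕ} (hk : k ≠ 0) (h : (α / β) ^ k = 1) :
    ‖α‖ = ‖β‖ := by
  have hβ : β ≠ 0 := by rintro rfl; simp [zero_pow hk] at h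
  have := Complex.norm_eq_one_of_pow_eq_one h hk
  rwa [norm_div, div_eq_one_iff_eq (norm_ne_zero_iff.2 hβ)] at this

theorem isDegenerate_X_add_C_mul_X_add_C_iff (c d : ℤ) :
    IsDegenerate ((X + C c) * (X + C d)) ↔ c ≠ 0 ∧ d = -c := by
  constructor
  · rintro ⟨α, β, hα, hβ, hne, k, hk, hroot⟩
    have hnorm := norm_eq_norm_of_div_pow_eq_one hk.ne' hroot
    rw [aeval_X_add_C_mul_X_add_C_eq_zero_iff] at hα hβ
    have hcd : (c : ℂ) ≠ d ∧ ‖(c : ℂ)‖ = ‖(d : ℂ)‖ := by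
      rcases hα with rfl | rfl <;> rcases hβ with rfl | rfl <;> simp_all [eq_comm]
    obtain ⟨hcd, habs⟩ := hcd
    norm_cast at hcd
    rw [Complex.norm_intCast, Complex.norm_intCast, abs_eq_abs] at habs
    norm_cast at habs
    omega
  · rintro ⟨hc, rfl⟩
    refine ⟨-c, c, ?_, ?_, ?_, 2, two_pos, ?_⟩
    · simp
    · simp
    · simpa [neg_eq_iff_add_eq_zero, ← two_mul] using hc
    · have : (c : ℂ) ≠ 0 := by exact_mod_cast hc
      field_simp

theorem X_sq_add_C_add_mul_X_add_C_mul {R : Type*} [CommRing R] (c d : R) :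
    X ^ 2 + C (c + d) * X + C (c * d) = (X + C c) * (X + C d) := by
  simp only [C_add, C_mul]
  ring

theorem not_irreducible_map_quadratic_iff (a b : ℤ) :
    ¬ Irreducible ((X ^ 2 + C a * X + C b : ℤ[X]).map (Int.castRingHom ℚ)) ↔
      ∃ c d : ℤ, b = c * d ∧ a = c + d := by
  have hm : (X ^ 2 + C a * X + C b : ℤ[X]).Monic := by monicity!
  have hdeg : (X ^ 2 + C a * X + C b : ℤ[X]).natDegree = 2 := by compute_degree!
  rw [← algebraMap_int_eq, ← hm.irreducible_iff_irreducible_map_fraction_map,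
    hm.not_irreducible_iff_exists_add_mul_eq_coeff hdeg]
  simp [-eq_intCast]

theorem not_irreducible_map_and_isDegenerate_iff (a b : ℤ) :
    (¬ Irreducible ((X ^ 2 + C a * X + C b : ℤ[X]).map (Int.castRingHom ℚ)) ∧
      IsDegenerate (X ^ 2 + C a * X + C b)) ↔ a = 0 ∧ ∃ n : ℕ, 0 < n ∧ b = -(n : ℤ) ^ 2 := by
  rw [not_irreducible_map_quadratic_iff]
  constructor
  · rintro ⟨⟨c, d, rfl, rfl⟩, hdeg⟩
    rw [X_sq_add_C_add_mul_X_add_C_mul, isDegenerate_X_add_C_mul_X_add_C_iff] at hdeg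
    obtain ⟨hc, rfl⟩ := hdeg
    exact ⟨by ring, c.natAbs, Int.natAbs_pos.2 hc, by rw [Int.natAbs_sq]; ring⟩
  · rintro ⟨rfl, n, hn, rfl⟩
    have hsplit := X_sq_add_C_add_mul_X_add_C_mul (n : ℤ) (-n)
    rw [add_neg_cancel, mul_neg, ← sq] at hsplit
    rw [hsplit, isDegenerate_X_add_C_mul_X_add_C_iff]
    exact ⟨⟨n, -n, by ring, by ring⟩, by exact_mod_cast hn.ne', rfl⟩

theorem filter_eq_zero_and_eq_neg_sq_eq_image (H : ℕ) :
    (Icc (-(H : ℤ)) H ×ˢ Icc (-(H : ℤ)) H).filter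
        (fun p => p.1 = 0 ∧ ∃ n : ℕ, 0 < n ∧ p.2 = -(n : ℤ) ^ 2) =
      (Icc 1 (Nat.sqrt H)).image (fun n : ℕ => ((0 : ℤ), -(n : ℤ) ^ 2)) := by
  ext ⟨a, b⟩
  simp only [mem_filter, mem_product, mem_image, mem_Icc, Prod.mk.injEq, Nat.le_sqrt']
  constructor
  · rintro ⟨⟨-, hb, -⟩, rfl, n, hn, rfl⟩
    have : (n : ℤ) ^ 2 ≤ H := by linarith
    exact ⟨n, ⟨hn, by exact_mod_cast this⟩, rfl, rfl⟩
  · rintro ⟨n, ⟨hn, hnH⟩, rfl, rfl⟩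
    have : (n : ℤ) ^ 2 ≤ H := by exact_mod_cast hnH
    exact ⟨⟨⟨by omega, by omega⟩, by linarith, by linarith [sq_nonneg (n : ℤ)]⟩, rfl, n, hn, rfl⟩

theorem count_reducible_degenerate_quadratic_general (H : ℕ) :
    ((Finset.Icc (-(H : ℤ)) H ×ˢ Finset.Icc (-(H : ℤ)) H).filter fun p =>
      ¬ Irreducible ((X ^ 2 + C p.1 * X + C p.2 : Polynomial ℤ).map (Int.castRingHom ℚ)) ∧
      IsDegenerate (X ^ 2 + C p.1 * X + C p.2)).card = Nat.sqrt H := by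
  have hinj : Function.Injective (fun n : ℕ => ((0 : ℤ), -(n : ℤ) ^ 2)) := fun m n h => by
    simpa using h
  simp_rw [not_irreducible_map_and_isDegenerate_iff]
  rw [filter_eq_zero_and_eq_neg_sq_eq_image, card_image_of_injective _ hinj, Nat.card_Icc,
    Nat.add_sub_cancel]

/-- The number of reducible monic degenerate quadratics `X² + a₁X + a₂ ∈ ℤ[X]` with
`|a₁|, |a₂| ≤ H` equals `⌊√H⌋`. -/
theorem count_reducible_degenerate_quadratic (H : ℕ) (hH : 1 ≤ H) :
    ((Finset.Icc (-(H : ℤ)) H ×ˢ Finset.Icc (-(H : ℤ)) H).filter fun p =>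
      ¬ Irreducible ((X ^ 2 + C p.1 * X + C p.2 : Polynomial ℤ).map (Int.castRingHom ℚ)) ∧
      IsDegenerate (X ^ 2 + C p.1 * X + C p.2)).card = Nat.sqrt H :=
  count_reducible_degenerate_quadratic_general H
end

section
/- Let f ∈ ℤ[X] be irreducible of degree n ≥ 2. Define two roots α, β of f to be equivalent if α/β is a root of unity. Then all equivalence classes of roots of f have the same cardinality ℓ, and n = s·ℓ where s is the number of equivalence classes. In particular, if f is degenerate (i.e., ℓ ≥ 2), then ℓ divides n. -/
/-!
Two roots of `f` are equivalent when their quotient has finite multiplicative order. Since the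
Galois group acts on the roots by field automorphisms, it maps classes onto classes, so every
class is a block of the action; the action is transitive because `f` is irreducible. For a
transitive action the translates of a nonempty block partition the whole set, and all have the
size of the block, which gives `n = s · ℓ`.
-/

open Polynomial
open scoped Pointwise

namespace MulAction

variable {G X : Type*} [Group G] [MulAction G X] (r : Setoid X)

lemma smul_setOf_rel (hr : ∀ (g : G) x y, r x y → r (g • x) (g • y)) (g : G) (x : X) :
    g • {y | r x y} = {y | r (g • x) y} := by
  ext y
  rw [Set.mem_smul_set_iff_inv_smul_mem]
  refine ⟨fun h ↦ by simpa using hr g _ _ h, fun h ↦ by simpa using hr g⁻¹ _ _ h⟩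

lemma isBlock_setOf_rel (hr : ∀ (g : G) x y, r x y → r (g • x) (g • y)) (x : X) :
    IsBlock G {y | r x y} := by
  refine isBlock_iff_smul_eq_or_disjoint.2 fun g ↦ ?_
  rw [smul_setOf_rel r hr]
  by_cases h : r (g • x) x
  · left
    ext y
    exact ⟨r.trans (r.symm h), r.trans h⟩
  · right
    exact Set.disjoint_left.2 fun y hgx hx ↦ h (r.trans hgx (r.symm hx))

lemma orbit_setOf_rel [IsPretransitive G X] (hr : ∀ (g : G) x y, r x y → r (g • x) (g • y))
    (x : X) : orbit G {y | r x y} = Set.range fun x' ↦ {y | r x' y} := by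
  ext A
  simp only [orbit, smul_setOf_rel r hr, Set.mem_range]
  constructor
  · rintro ⟨g, rfl⟩
    exact ⟨g • x, rfl⟩
  · rintro ⟨x', rfl⟩
    obtain ⟨g, rfl⟩ := exists_smul_eq G x x'
    exact ⟨g, rfl⟩

theorem ncard_setOf_rel_mul_ncard_range [IsPretransitive G X]
    (hr : ∀ (g : G) x y, r x y → r (g • x) (g • y)) (x : X) :
    {y | r x y}.ncard * (Set.range fun x' ↦ {y | r x' y}).ncard = Nat.card X := by
  rw [← orbit_setOf_rel r hr x]
  exact (isBlock_setOf_rel r hr x).ncard_block_mul_ncard_orbit_eq ⟨x, r.refl x⟩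

end MulAction

lemma isOfFinOrder_div_comm {M : Type*} [DivisionMonoid M] {x y : M} :
    IsOfFinOrder (x / y) ↔ IsOfFinOrder (y / x) := by
  rw [← inv_div y x]
  simp only [isOfFinOrder_iff_pow_eq_one, inv_pow, inv_eq_one]

lemma IsOfFinOrder.div_trans {K : Type*} [CommGroupWithZero K] {x y z : K}
    (hxy : IsOfFinOrder (x / y)) (hyz : IsOfFinOrder (y / z)) (hy : y ≠ 0) :
    IsOfFinOrder (x / z) := by
  rw [← div_mul_div_cancel₀ hy]
  exact hxy.mul hyz

lemma isOfFinOrder_map_div_map_iff {K L : Type*} [DivisionRing K] [DivisionRing L]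
    (φ : K →+* L) {x y : K} : IsOfFinOrder (φ x / φ y) ↔ IsOfFinOrder (x / y) := by
  rw [← map_div₀]
  exact φ.injective.isOfFinOrder_iff (f := φ.toMonoidHom)

def finOrderDivSetoid {K : Type*} [CommGroupWithZero K] (S : Set K) (hS : (0 : K) ∉ S) : Setoid S where
  r x y := IsOfFinOrder ((x : K) / y)
  iseqv :=
    { refl x := by
        rw [div_self (ne_of_mem_of_not_mem x.2 hS)]
        exact IsOfFinOrder.one
      symm := isOfFinOrder_div_comm.1
      trans {_ y _} hxy hyz := hxy.div_trans hyz (ne_of_mem_of_not_mem y.2 hS) }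

namespace Set

variable {α : Type*} (S : Set α)

lemma image_val_setOf (q : α → Prop) : Subtype.val '' {b : S | q b} = {b ∈ S | q b} :=
  Subtype.image_preimage_coe S {b | q b}

lemma ncard_sep_eq_ncard_subtype (q : α → Prop) : {b ∈ S | q b}.ncard = {b : S | q b}.ncard := by
  rw [← image_val_setOf, ncard_image_of_injective _ Subtype.val_injective]

lemma ncard_setOf_exists_eq_sep (q : α → α → Prop) :
    {A | ∃ a ∈ S, A = {b ∈ S | q a b}}.ncard = (range fun a : S ↦ {b : S | q a b}).ncard := by
  rw [← ncard_image_of_injective _ Subtype.val_injective.image_injective, ← range_comp]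
  congr 1
  ext A
  simp only [Function.comp_def, image_val_setOf, mem_range, Subtype.exists, exists_prop, eq_comm]
  rfl

end Set

namespace Polynomial

variable {F E : Type*} [Field F] [Field E] [Algebra F E] {p : F[X]}

lemma Gal.isOfFinOrder_smul_div_smul_iff [Fact (p.map (algebraMap F E)).Splits] (σ : p.Gal)
    (x y : p.rootSet E) :
    IsOfFinOrder (((σ • x : p.rootSet E) : E) / (σ • y : p.rootSet E)) ↔
      IsOfFinOrder ((x : E) / y) := by
  obtain ⟨a, rfl⟩ := (rootsEquivRoots p E).surjective x
  obtain ⟨b, rfl⟩ := (rootsEquivRoots p E).surjective y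
  simp only [smul_def, Equiv.symm_apply_apply]
  exact (isOfFinOrder_map_div_map_iff (algebraMap p.SplittingField E)).trans
    ((isOfFinOrder_map_div_map_iff (σ : p.SplittingField →+* p.SplittingField)).trans
      (isOfFinOrder_map_div_map_iff (algebraMap p.SplittingField E)).symm)

lemma zero_notMem_rootSet_of_irreducible (hp : Irreducible p) (hdeg : p.natDegree ≠ 1) :
    (0 : E) ∉ p.rootSet E := by
  intro h0
  have hroot : p.IsRoot 0 := by
    have h := (mem_rootSet'.1 h0).2
    rwa [← map_zero (algebraMap F E), aeval_algebraMap_apply, (algebraMap F E).injective.eq_iff,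
      coe_aeval_eq_eval] at h
  exact hdeg (natDegree_eq_of_degree_eq_some (degree_eq_one_of_irreducible_of_root hp hroot))

theorem ncard_sep_isOfFinOrder_div_mul_ncard_classes (hp : Irreducible p)
    (hsplit : (p.map (algebraMap F E)).Splits) (h0 : (0 : E) ∉ p.rootSet E) {α : E}
    (hα : α ∈ p.rootSet E) :
    {β ∈ p.rootSet E | IsOfFinOrder (α / β)}.ncard *
        {A | ∃ α ∈ p.rootSet E, A = {β ∈ p.rootSet E | IsOfFinOrder (α / β)}}.ncard =
      Nat.card (p.rootSet E) := by
  have := Fact.mk hsplit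
  have := Gal.galAction_isPretransitive p E hp
  rw [Set.ncard_sep_eq_ncard_subtype, Set.ncard_setOf_exists_eq_sep]
  exact MulAction.ncard_setOf_rel_mul_ncard_range (G := p.Gal) (finOrderDivSetoid _ h0)
    (fun σ x y ↦ (Gal.isOfFinOrder_smul_div_smul_iff σ x y).2) ⟨α, hα⟩

end Polynomial

/-- For `f ∈ ℤ[X]` irreducible of degree `n ≥ 2`, all equivalence classes of roots of `f`
under the relation "the quotient is a root of unity" have the same cardinality `ℓ`, and
`n = s·ℓ` where `s` is the number of classes; in particular, if `f` is degenerate then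
`ℓ ≥ 2` and `ℓ ∣ n`. -/
theorem equivalence_classes_of_roots (n : ℕ) (hn : 2 ≤ n) (f : Polynomial ℤ)
    (hirr : Irreducible (f.map (Int.castRingHom ℚ))) (hdeg : f.natDegree = n) :
    ∃ ℓ s : ℕ, n = s * ℓ ∧
      (∀ α ∈ f.rootSet ℂ,
        {β ∈ f.rootSet ℂ | ∃ k : ℕ, 0 < k ∧ (α / β) ^ k = 1}.ncard = ℓ) ∧
      s = {A : Set ℂ | ∃ α ∈ f.rootSet ℂ,
        A = {β ∈ f.rootSet ℂ | ∃ k : ℕ, 0 < k ∧ (α / β) ^ k = 1}}.ncard ∧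
      (2 ≤ ℓ → ℓ ∣ n) := by
  set g := f.map (Int.castRingHom ℚ) with hg
  have hroots : f.rootSet ℂ = g.rootSet ℂ := by
    rw [rootSet, rootSet, hg, ← algebraMap_int_eq, aroots_map]
  have hgdeg : g.natDegree = n := by
    rw [hg, natDegree_map_eq_of_injective (RingHom.injective_int _), hdeg]
  have hsplit : (g.map (algebraMap ℚ ℂ)).Splits := IsAlgClosed.splits _
  have hcard : Nat.card (g.rootSet ℂ) = n := by
    rw [Nat.card_eq_fintype_card, card_rootSet_eq_natDegree hirr.separable hsplit, hgdeg]
  have h0 : (0 : ℂ) ∉ g.rootSet ℂ := zero_notMem_rootSet_of_irreducible hirr (by omega)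
  have hclasses := fun α (hα : α ∈ g.rootSet ℂ) ↦
    ncard_sep_isOfFinOrder_div_mul_ncard_classes hirr hsplit h0 hα
  simp_rw [hroots, ← isOfFinOrder_iff_pow_eq_one]
  obtain ⟨α₀, hα₀⟩ : (g.rootSet ℂ).Nonempty :=
    Set.nonempty_coe_sort.1 (Nat.card_pos_iff.1 (by omega)).1
  set s := {A | ∃ α ∈ g.rootSet ℂ, A = {β ∈ g.rootSet ℂ | IsOfFinOrder (α / β)}}.ncard
  have hns : n = s * {β ∈ g.rootSet ℂ | IsOfFinOrder (α₀ / β)}.ncard := by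
    rw [← hcard, ← hclasses α₀ hα₀, mul_comm]
  refine ⟨_, s, hns, fun α hα ↦ ?_, rfl, fun _ ↦ hns ▸ dvd_mul_left _ _⟩
  have hs : 0 < s := Nat.pos_of_ne_zero fun hs ↦ by rw [hs, zero_mul] at hns; omega
  exact Nat.eq_of_mul_eq_mul_right hs ((hclasses α hα).trans (hclasses α₀ hα₀).symm)
end

section
/- Let ℓ ≥ 2 and let g ∈ ℤ[X] be a monic irreducible polynomial of degree m with a root γ > 0 such that every other root of g has modulus strictly less than γ, and such that |g(0)| = 2q with q an odd positive integer. Then the polynomial f(X) = g(X^ℓ) is irreducible over ℚ. -/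
/-!
By Capelli's lemma (`Polynomial.irreducible_comp`) it suffices to show that `X ^ ℓ - α` is
irreducible over `ℚ(α)` for a root `α` of `g`. Since `N(α) = ±g(0) = ±2q`, the `2`-adic valuation
of `N(α)` is `1`. If the `p`-adic valuation of `N_{K/ℚ}(a)` is coprime to `n`, then `a` is not a
`d`-th power for any `1 ≠ d ∣ n`, and adjoining a root `β` of `X ^ d - a` gives `N(β) = ±N(a)`, so
the condition is inherited by `β` and `n / d`; induction on `n` concludes.
-/

open Polynomial IntermediateField

theorem IntermediateField.AdjoinSimple.norm_gen_eq_coeff_zero_minpoly {K E : Type*} [Field K]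
    [Field E] [Algebra K E] {x : E} (hx : IsIntegral K x) :
    Algebra.norm K (AdjoinSimple.gen K x) =
      (-1) ^ (minpoly K x).natDegree * (minpoly K x).coeff 0 := by
  rw [← adjoin.powerBasis_gen hx, Algebra.PowerBasis.norm_gen_eq_coeff_zero_minpoly,
    adjoin.powerBasis_gen, minpoly_gen]
  rfl

theorem padicValRat_neg_one_pow_mul (p k : ℕ) (r : ℚ) :
    padicValRat p ((-1) ^ k * r) = padicValRat p r := by
  rcases neg_one_pow_eq_or ℚ k with h | h <;> simp [h, padicValRat.neg]

theorem padicValRat_two_mul_of_odd {q : ℤ} (hq : Odd q) : padicValRat 2 (2 * q) = 1 := by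
  have hq₀ : (q : ℚ) ≠ 0 := by rintro h; norm_num [Int.cast_eq_zero.mp h] at hq
  have h2 : padicValRat 2 2 = 1 := by exact_mod_cast padicValRat.self (p := 2) one_lt_two
  rw [padicValRat.mul two_ne_zero hq₀, h2, padicValRat.of_int,
    padicValInt.eq_zero_of_not_dvd (Int.not_even_iff_odd.mpr hq ∘ even_iff_two_dvd.mpr)]
  rfl

section NormValuation

variable (p : ℕ) {K : Type*} [Field K] [Algebra ℚ K]

theorem pow_ne_of_isCoprime_padicValRat_norm [Fact p.Prime] {n d : ℕ} {a : K}
    (ha : IsCoprime (padicValRat p (Algebra.norm ℚ a)) n) (hd : d ∣ n) (hd' : d ≠ 1) (b : K) :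
    b ^ d ≠ a := by
  rintro rfl
  rw [map_pow, padicValRat.pow] at ha
  have : IsUnit (d : ℤ) := ha.isUnit_of_dvd' (dvd_mul_right _ _) (Int.natCast_dvd_natCast.mpr hd)
  exact hd' (Nat.isUnit_iff.mp (Int.ofNat_isUnit.mp this))

theorem padicValRat_norm_eq_of_norm_eq_neg_one_pow_mul {L : Type*} [Field L] [Algebra K L]
    [Algebra ℚ L] [IsScalarTower ℚ K L] {y : L} {a : K} {k : ℕ}
    (h : Algebra.norm K y = (-1) ^ k * a) :
    padicValRat p (Algebra.norm ℚ y) = padicValRat p (Algebra.norm ℚ a) := by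
  have hneg : (-1 : K) = algebraMap ℚ K (-1) := by simp
  rw [← Algebra.norm_norm (S := K), h, map_mul, map_pow, hneg, Algebra.norm_algebraMap, ← pow_mul,
    padicValRat_neg_one_pow_mul]

theorem X_pow_sub_C_irreducible_of_isCoprime_padicValRat_norm [Fact p.Prime] {n : ℕ} (hn : n ≠ 0)
    {a : K} (ha : IsCoprime (padicValRat p (Algebra.norm ℚ a)) n) : Irreducible (X ^ n - C a) := by
  induction n using induction_on_primes generalizing K a with
  | zero => exact absurd rfl hn
  | one => simpa using irreducible_X_sub_C a
  | prime_mul d n hd IH =>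
    rw [mul_comm]
    refine X_pow_mul_sub_C_irreducible (X_pow_sub_C_irreducible_of_prime hd
      (pow_ne_of_isCoprime_padicValRat_norm p ha (dvd_mul_right _ _) hd.ne_one)) ?_
    intro E _ _ x hx
    have hx_int : IsIntegral K x := minpoly.ne_zero_iff.mp (hx ▸ X_pow_sub_C_ne_zero hd.pos a)
    have : CharZero K := charZero_of_injective_algebraMap (algebraMap ℚ K).injective
    have : CharZero E := charZero_of_injective_algebraMap (algebraMap K E).injective
    have : IsScalarTower ℚ K K⟮x⟯ := IsScalarTower.of_algebraMap_eq' (Subsingleton.elim _ _)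
    have hnorm : Algebra.norm K (AdjoinSimple.gen K x) = (-1) ^ (d + 1) * a := by
      rw [AdjoinSimple.norm_gen_eq_coeff_zero_minpoly hx_int, hx, natDegree_X_pow_sub_C]
      simp [hd.ne_zero.symm, pow_succ]
    refine IH (right_ne_zero_of_mul hn) ?_
    rw [padicValRat_norm_eq_of_norm_eq_neg_one_pow_mul p hnorm]
    push_cast at ha
    exact ha.of_mul_right_right

end NormValuation

theorem comp_pow_irreducible_general (ℓ : ℕ) (hℓ : 2 ≤ ℓ) (g : Polynomial ℤ)
    (hmonic : g.Monic)
    (hirr : Irreducible (g.map (Int.castRingHom ℚ)))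
    (q : ℤ) (hodd : Odd q) (hconst : |g.coeff 0| = 2 * q) :
    Irreducible ((g.comp (X ^ ℓ)).map (Int.castRingHom ℚ)) := by
  rw [Polynomial.map_comp, Polynomial.map_pow, map_X]
  refine irreducible_comp (hmonic.map _) (monic_X_pow ℓ) hirr fun E _ _ x hx => ?_
  rw [Polynomial.map_pow, map_X]
  have hx_int : IsIntegral ℚ x := minpoly.ne_zero_iff.mp (hx ▸ (hmonic.map _).ne_zero)
  have hval : padicValRat 2 (g.coeff 0) = 1 := by
    obtain h | h := (abs_eq (hconst ▸ abs_nonneg _)).mp hconst <;>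
      simpa [h, padicValRat.neg] using padicValRat_two_mul_of_odd hodd
  -- the instance of `norm_gen_eq_coeff_zero_minpoly`, not defeq to `DivisionRing.toRatAlgebra`
  let : Algebra ℚ ℚ⟮x⟯ := IntermediateField.algebra' ℚ⟮x⟯
  refine X_pow_sub_C_irreducible_of_isCoprime_padicValRat_norm 2 (by omega) ?_
  rw [AdjoinSimple.norm_gen_eq_coeff_zero_minpoly hx_int, hx, coeff_map, eq_intCast,
    padicValRat_neg_one_pow_mul, hval]
  exact isCoprime_one_left

/-- Let `ℓ ≥ 2` and let `g ∈ ℤ[X]` be monic irreducible with a positive real root `γ`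
dominating the moduli of all other roots, and with `|g(0)| = 2q` for `q` odd positive.
Then `g(X^ℓ)` is irreducible over `ℚ`. -/
theorem comp_pow_irreducible (ℓ : ℕ) (hℓ : 2 ≤ ℓ) (g : Polynomial ℤ) (m : ℕ)
    (hmonic : g.Monic) (hdeg : g.natDegree = m)
    (hirr : Irreducible (g.map (Int.castRingHom ℚ)))
    (γ : ℝ) (hγ : 0 < γ) (hroot : Polynomial.aeval (γ : ℂ) g = 0)
    (hdom : ∀ z : ℂ, Polynomial.aeval z g = 0 → z ≠ (γ : ℂ) → ‖z‖ < γ)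
    (q : ℤ) (hq : 0 < q) (hodd : Odd q) (hconst : |g.coeff 0| = 2 * q) :
    Irreducible ((g.comp (X ^ ℓ)).map (Int.castRingHom ℚ)) :=
  comp_pow_irreducible_general ℓ hℓ g hmonic hirr q hodd hconst
end

section
/- Let n ≥ 2 and H ≥ 1 be integers. The number of degenerate monic polynomials X^n + a_1 X^{n-1} + ... + a_n ∈ ℤ[X] with |a_j| ≤ H for all j is O(H^{n-1}), where the implied constant depends only on n. -/
open Polynomial

/-!
If `α ≠ β` are roots of `f` and `η = α / β` is a root of unity, then `η` lies in `ℚ(α, β)`, of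
degree at most `n²`, so its order `k` satisfies `φ(k) ≤ n²` and hence `k ∣ (2n²)!`; thus `η`
ranges over a finite set `R` depending only on `n`. Write `f = g + c` with `c = f(0)`. Then `β`
is a root of `g(X) - g(ηX)`, which is nonzero as soon as the linear coefficient of `g` is, and
`c = -g(β)`. So once the non-constant coefficients of `f` are fixed with `a_{n-1} ≠ 0`, the
constant term takes at most `|R| · n` values; the polynomials with `a_{n-1} = 0` are at most
`(2H+1)^(n-1)` in number.
-/

open scoped Nat

open Finset IntermediateField Module

theorem Nat.dvd_factorial_two_mul_of_totient_le {k N : ℕ} (hk : k ≠ 0) (h : φ k ≤ N) :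
    k ∣ (2 * N)! := by
  rw [Nat.dvd_iff_prime_pow_dvd_dvd]
  intro p a hp hpa
  rcases Nat.eq_zero_or_pos a with rfl | ha
  · simp
  have hφ : p ^ (a - 1) * (p - 1) ≤ N := by
    rw [← Nat.totient_prime_pow hp ha]
    exact (Nat.le_of_dvd (Nat.totient_pos.2 (Nat.pos_of_ne_zero hk))
      (Nat.totient_dvd_of_dvd hpa)).trans h
  refine Nat.dvd_factorial (pow_pos hp.pos a) ?_
  calc p ^ a = p ^ (a - 1) * p := by rw [← pow_succ, Nat.sub_add_cancel ha]
    _ ≤ p ^ (a - 1) * (2 * (p - 1)) := by gcongr; have := hp.two_le; omega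
    _ ≤ 2 * N := by linarith

theorem totient_orderOf_div_le_natDegree_sq {L : Type*} [Field L] [CharZero L] {f : ℚ[X]}
    (hf : f ≠ 0) {α β : L} (hα : aeval α f = 0) (hβ : aeval β f = 0) :
    φ (orderOf (α / β)) ≤ f.natDegree ^ 2 := by
  rcases Nat.eq_zero_or_pos (orderOf (α / β)) with hk | hk
  · simp [hk]
  have hdeg {x : L} (hx : aeval x f = 0) : finrank ℚ ℚ⟮x⟯ ≤ f.natDegree := by
    rw [adjoin.finrank (IsAlgebraic.isIntegral ⟨f, hf, hx⟩)]
    exact natDegree_le_of_dvd (minpoly.dvd ℚ x hx) hf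
  have : FiniteDimensional ℚ ℚ⟮α⟯ :=
    adjoin.finiteDimensional (IsAlgebraic.isIntegral ⟨f, hf, hα⟩)
  have : FiniteDimensional ℚ ℚ⟮β⟯ :=
    adjoin.finiteDimensional (IsAlgebraic.isIntegral ⟨f, hf, hβ⟩)
  have hmem : α / β ∈ ℚ⟮α⟯ ⊔ ℚ⟮β⟯ :=
    div_mem (le_sup_left (a := ℚ⟮α⟯) (mem_adjoin_simple_self ℚ α))
      (le_sup_right (b := ℚ⟮β⟯) (mem_adjoin_simple_self ℚ β))
  calc φ (orderOf (α / β)) = (minpoly ℚ (α / β)).natDegree := by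
        rw [← cyclotomic_eq_minpoly_rat (IsPrimitiveRoot.orderOf _) hk, natDegree_cyclotomic]
    _ = finrank ℚ ℚ⟮α / β⟯ :=
        (adjoin.finrank (IsPrimitiveRoot.orderOf _ |>.isIntegral hk |>.tower_top)).symm
    _ ≤ finrank ℚ ↥(ℚ⟮α⟯ ⊔ ℚ⟮β⟯) := finrank_le_of_le_right (adjoin_simple_le_iff.2 hmem)
    _ ≤ finrank ℚ ℚ⟮α⟯ * finrank ℚ ℚ⟮β⟯ := finrank_sup_le _ _
    _ ≤ f.natDegree ^ 2 := by rw [sq]; exact Nat.mul_le_mul (hdeg hα) (hdeg hβ)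

theorem IsDegenerate.exists_ratio_mem_nthRootsFinset {f : ℤ[X]} (hf : f ≠ 0)
    (h : IsDegenerate f) :
    ∃ η ∈ (nthRootsFinset (2 * f.natDegree ^ 2)! (1 : ℂ)).erase 1,
      ∃ β : ℂ, aeval β f = 0 ∧ aeval (η * β) f = 0 := by
  obtain ⟨α, β, hα, hβ, hne, k, hk, hpow⟩ := h
  have hβ0 : β ≠ 0 := by
    rintro rfl
    simp [zero_pow hk.ne'] at hpow
  have hfQ : f.map (algebraMap ℤ ℚ) ≠ 0 :=
    (Polynomial.map_ne_zero_iff (algebraMap ℤ ℚ).injective_int).2 hf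
  have hord : orderOf (α / β) ∣ (2 * f.natDegree ^ 2)! := by
    refine Nat.dvd_factorial_two_mul_of_totient_le
      (orderOf_pos_iff.2 (isOfFinOrder_iff_pow_eq_one.2 ⟨k, hk, hpow⟩)).ne' ?_
    have := totient_orderOf_div_le_natDegree_sq (α := α) (β := β) hfQ
      (by rwa [aeval_map_algebraMap ℚ]) (by rwa [aeval_map_algebraMap ℚ])
    rwa [natDegree_map_eq_of_injective (algebraMap ℤ ℚ).injective_int] at this
  refine ⟨α / β, Finset.mem_erase.2 ⟨?_, ?_⟩, β, hβ, by rwa [div_mul_cancel₀ α hβ0]⟩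
  · rwa [Ne, div_eq_one_iff_eq hβ0]
  · rw [mem_nthRootsFinset (Nat.factorial_pos _), ← orderOf_dvd_iff_pow_eq_one]
    exact hord

section RatioRoots

variable {K : Type*} [CommRing K] [IsDomain K]

theorem sub_comp_C_mul_X_ne_zero {g : K[X]} (hg : g.coeff 1 ≠ 0) {η : K} (hη : η ≠ 1) :
    g - g.comp (C η * X) ≠ 0 := by
  intro h
  have h1 := congrArg (coeff · 1) h
  simp only [coeff_sub, comp_C_mul_X_coeff, pow_one, coeff_zero] at h1
  exact mul_ne_zero hg (sub_ne_zero.2 hη.symm) (by linear_combination h1)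

variable [DecidableEq K]

noncomputable def ratioRootConstants (g : K[X]) (R : Finset K) : Finset K :=
  (∏ η ∈ R, (g - g.comp (C η * X))).roots.toFinset.image fun β => -g.eval β

theorem mem_ratioRootConstants {g : K[X]} {R : Finset K} (hR : 1 ∉ R) (hg : g.coeff 1 ≠ 0)
    {η β c : K} (hη : η ∈ R) (hβ : (g + C c).eval β = 0) (hηβ : (g + C c).eval (η * β) = 0) :
    c ∈ ratioRootConstants g R := by
  simp only [eval_add, eval_C] at hβ hηβ
  have hprod : ∏ η ∈ R, (g - g.comp (C η * X)) ≠ 0 :=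
    prod_ne_zero_iff.2 fun η hη => sub_comp_C_mul_X_ne_zero hg (ne_of_mem_of_not_mem hη hR)
  refine mem_image.2 ⟨β, ?_, by linear_combination -hβ⟩
  rw [Multiset.mem_toFinset, mem_roots hprod, IsRoot, eval_prod]
  refine prod_eq_zero hη ?_
  simp only [eval_sub, eval_comp, eval_mul, eval_C, eval_X]
  linear_combination hβ - hηβ

theorem card_ratioRootConstants_le (g : K[X]) (R : Finset K) :
    #(ratioRootConstants g R) ≤ #R * g.natDegree :=
  calc #(ratioRootConstants g R)
      ≤ Multiset.card (∏ η ∈ R, (g - g.comp (C η * X))).roots :=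
        card_image_le.trans (Multiset.toFinset_card_le _)
    _ ≤ (∏ η ∈ R, (g - g.comp (C η * X))).natDegree := card_roots' _
    _ ≤ ∑ η ∈ R, (g - g.comp (C η * X)).natDegree := natDegree_prod_le _ _
    _ ≤ ∑ _η ∈ R, g.natDegree := sum_le_sum fun η _ =>
        (natDegree_sub_le _ _).trans <| max_le le_rfl <| natDegree_comp_le.trans <|
          mul_le_of_le_one_right (Nat.zero_le _) ((natDegree_C_mul_le η X).trans natDegree_X_le)
    _ = #R * g.natDegree := by rw [sum_const, smul_eq_mul]

end RatioRoots

theorem IsDegenerate.coeff_zero_mem_ratioRootConstants {f : ℤ[X]} (hf : f ≠ 0)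
    (h1 : f.coeff 1 ≠ 0) (h : IsDegenerate f) :
    (f.coeff 0 : ℂ) ∈ ratioRootConstants ((f - C (f.coeff 0)).map (Int.castRingHom ℂ))
      ((nthRootsFinset (2 * f.natDegree ^ 2)! (1 : ℂ)).erase 1) := by
  obtain ⟨η, hη, β, hβ, hηβ⟩ := h.exists_ratio_mem_nthRootsFinset hf
  have heval (x : ℂ) :
      ((f - C (f.coeff 0)).map (Int.castRingHom ℂ) + C (f.coeff 0 : ℂ)).eval x = aeval x f := by
    simp [eval_map, aeval_def]
  refine mem_ratioRootConstants (notMem_erase 1 _) ?_ hη (by rw [heval, hβ]) (by rw [heval, hηβ])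
  rwa [coeff_map, coeff_sub, coeff_C_of_ne_zero one_ne_zero, sub_zero, eq_intCast,
    Int.cast_ne_zero]

theorem Polynomial.Monic.eq_of_forall_coeff_lt {R : Type*} [Semiring R] {f g : R[X]} {n : ℕ}
    (hf : f.Monic) (hg : g.Monic) (hfn : f.natDegree = n) (hgn : g.natDegree = n)
    (h : ∀ i < n, f.coeff i = g.coeff i) : f = g := by
  ext i
  rcases lt_trichotomy i n with hi | rfl | hi
  · exact h i hi
  · rw [← hfn, hf.coeff_natDegree, hfn, ← hgn, hg.coeff_natDegree]
  · rw [coeff_eq_zero_of_natDegree_lt (hfn ▸ hi), coeff_eq_zero_of_natDegree_lt (hgn ▸ hi)]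

theorem Set.ncard_le_mul_ncard_of_mapsTo {α β : Type*} {s : Set α} {t : Set β} {p : α → β}
    (hst : Set.MapsTo p s t) (ht : t.Finite) {D : ℕ} (hD : ∀ b ∈ t, (s ∩ p ⁻¹' {b}).ncard ≤ D) :
    s.ncard ≤ D * t.ncard := by
  lift t to Finset β using ht
  have hs : s = ⋃ b ∈ t, s ∩ p ⁻¹' {b} := by
    ext x
    simpa using fun hx => hst hx
  calc s.ncard = (⋃ b ∈ t, s ∩ p ⁻¹' {b}).ncard := congrArg Set.ncard hs
    _ ≤ ∑ b ∈ t, (s ∩ p ⁻¹' {b}).ncard := set_ncard_biUnion_le _ _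
    _ ≤ ∑ _b ∈ t, D := sum_le_sum hD
    _ = D * (t : Set β).ncard := by rw [sum_const, smul_eq_mul, Set.ncard_coe_finset, mul_comm]

def boundedMonic (n H : ℕ) : Set ℤ[X] :=
  {f | f.Monic ∧ f.natDegree = n ∧ ∀ i, |f.coeff i| ≤ H}

theorem injOn_coeff_boundedMonic (n H : ℕ) :
    Set.InjOn (fun f (i : Fin n) => f.coeff i) (boundedMonic n H) :=
  fun _ hf _ hg hfg =>
    hf.1.eq_of_forall_coeff_lt hg.1 hf.2.1 hg.2.1 fun i hi => congrFun hfg ⟨i, hi⟩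

theorem finite_boundedMonic (n H : ℕ) : (boundedMonic n H).Finite :=
  .of_injOn (t := (Fintype.piFinset fun _ : Fin n => Icc (-(H : ℤ)) H : Set (Fin n → ℤ)))
    (fun _ hf => Fintype.mem_piFinset.2 fun i => mem_Icc.2 (abs_le.1 (hf.2.2 i)))
    (injOn_coeff_boundedMonic n H) (finite_toSet _)

theorem ncard_boundedMonic_inter_coeff_eq_zero_le {n j : ℕ} (hj : j < n) (H : ℕ) :
    (boundedMonic n H ∩ {f | f.coeff j = 0}).ncard ≤ (2 * H + 1) ^ (n - 1) := by
  let B : Fin n → Finset ℤ := Function.update (fun _ => Icc (-(H : ℤ)) H) ⟨j, hj⟩ {0}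
  have hmaps : ∀ f ∈ boundedMonic n H ∩ {f | f.coeff j = 0},
      (fun (i : Fin n) => f.coeff i) ∈ (Fintype.piFinset B : Set (Fin n → ℤ)) := by
    rintro f ⟨hf, hj0⟩
    refine Fintype.mem_piFinset.2 fun i => ?_
    rcases eq_or_ne i ⟨j, hj⟩ with rfl | hi
    · simpa [B] using hj0
    · simpa [B, hi] using abs_le.1 (hf.2.2 i)
  calc _ ≤ (Fintype.piFinset B : Set (Fin n → ℤ)).ncard :=
        Set.ncard_le_ncard_of_injOn _ hmaps
          ((injOn_coeff_boundedMonic n H).mono Set.inter_subset_left)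
    _ = (2 * H + 1) ^ (n - 1) := by
        rw [Set.ncard_coe_finset, Fintype.card_piFinset]
        simp only [B, Function.apply_update (fun _ => Finset.card)]
        rw [prod_update_of_mem (mem_univ _), card_singleton, one_mul, prod_const, Int.card_Icc,
          card_sdiff_of_subset (by simp), Finset.card_univ, Fintype.card_fin, card_singleton]
        congr 1
        omega

theorem sub_C_coeff_zero_mem_boundedMonic {n H : ℕ} (hn : 0 < n) {f : ℤ[X]}
    (hf : f ∈ boundedMonic n H) :
    f - C (f.coeff 0) ∈ boundedMonic n H ∩ {g | g.coeff 0 = 0} := by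
  obtain ⟨hm, hd, hb⟩ := hf
  refine ⟨⟨hm.sub_of_left (degree_C_le.trans_lt ?_), by rw [natDegree_sub_C, hd], fun i => ?_⟩,
    by simp⟩
  · rw [degree_eq_natDegree hm.ne_zero, hd]
    exact_mod_cast hn
  · rw [coeff_sub, coeff_C]
    split_ifs with hi
    · simp [hi]
    · simpa using hb i

theorem ncard_boundedMonic_degenerate_coeff_one_ne_zero_le {n : ℕ} (hn : 2 ≤ n) (H : ℕ) :
    (boundedMonic n H ∩ {f | IsDegenerate f ∧ f.coeff 1 ≠ 0}).ncard ≤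
      (2 * n ^ 2)! * n * (2 * H + 1) ^ (n - 1) := by
  set R := (nthRootsFinset (2 * n ^ 2)! (1 : ℂ)).erase 1
  have hmaps : Set.MapsTo (fun f => f - C (f.coeff 0))
      (boundedMonic n H ∩ {f | IsDegenerate f ∧ f.coeff 1 ≠ 0})
      (boundedMonic n H ∩ {g | g.coeff 0 = 0}) :=
    fun f hf => sub_C_coeff_zero_mem_boundedMonic (by omega) hf.1
  refine (Set.ncard_le_mul_ncard_of_mapsTo hmaps ((finite_boundedMonic n H).inter_of_left _)
    fun g hg => ?_).trans (Nat.mul_le_mul_left _ (ncard_boundedMonic_inter_coeff_eq_zero_le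
      (by omega) H))
  have hfiber : ∀ f ∈ (boundedMonic n H ∩ {f | IsDegenerate f ∧ f.coeff 1 ≠ 0}) ∩
      (fun f => f - C (f.coeff 0)) ⁻¹' {g}, f = g + C (f.coeff 0) := fun f hf =>
    eq_add_of_sub_eq hf.2
  calc _ ≤ (ratioRootConstants (g.map (Int.castRingHom ℂ)) R : Set ℂ).ncard := by
        refine Set.ncard_le_ncard_of_injOn (fun f => (f.coeff 0 : ℂ)) ?_ ?_
        · rintro f hf
          obtain ⟨⟨⟨hm, hd, -⟩, hdeg, h1⟩, hfg⟩ := hf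
          have := hdeg.coeff_zero_mem_ratioRootConstants hm.ne_zero h1
          rwa [hd, show f - C (f.coeff 0) = g from hfg] at this
        · intro f hf f' hf' hff'
          rw [hfiber f hf, hfiber f' hf', Int.cast_injective hff']
    _ ≤ #R * (g.map (Int.castRingHom ℂ)).natDegree := by
        rw [Set.ncard_coe_finset]
        exact card_ratioRootConstants_le _ _
    _ ≤ (2 * n ^ 2)! * n :=
        Nat.mul_le_mul
          (card_erase_le.trans ((Multiset.toFinset_card_le _).trans (card_nthRoots _ _)))
          (natDegree_map_le.trans hg.1.2.1.le)

theorem ncard_boundedMonic_degenerate_le {n : ℕ} (hn : 2 ≤ n) (H : ℕ) :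
    (boundedMonic n H ∩ {f | IsDegenerate f}).ncard ≤
      ((2 * n ^ 2)! * n + 1) * (2 * H + 1) ^ (n - 1) := by
  have hsplit : boundedMonic n H ∩ {f | IsDegenerate f} ⊆
      boundedMonic n H ∩ {f | f.coeff 1 = 0} ∪
        boundedMonic n H ∩ {f | IsDegenerate f ∧ f.coeff 1 ≠ 0} :=
    fun f ⟨hb, hd⟩ => (em (f.coeff 1 = 0)).imp (fun h => ⟨hb, h⟩) (fun h => ⟨hb, hd, h⟩)
  calc _ ≤ _ := Set.ncard_le_ncard hsplit ((finite_boundedMonic n H).subset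
        (Set.union_subset Set.inter_subset_left Set.inter_subset_left))
    _ ≤ _ := Set.ncard_union_le _ _
    _ ≤ (2 * H + 1) ^ (n - 1) + (2 * n ^ 2)! * n * (2 * H + 1) ^ (n - 1) :=
        add_le_add (ncard_boundedMonic_inter_coeff_eq_zero_le (by omega) H)
          (ncard_boundedMonic_degenerate_coeff_one_ne_zero_le hn H)
    _ = ((2 * n ^ 2)! * n + 1) * (2 * H + 1) ^ (n - 1) := by ring

/-- For fixed `n ≥ 2`, the number of degenerate monic integer polynomials of degree `n`
and height at most `H` is `O(H^{n-1})`. -/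
theorem degenerate_monic_count_upper (n : ℕ) (hn : 2 ≤ n) :
    ∃ C : ℝ, 0 < C ∧ ∀ H : ℕ, 1 ≤ H →
      ({f : Polynomial ℤ | f.Monic ∧ f.natDegree = n ∧
          (∀ i, |f.coeff i| ≤ (H : ℤ)) ∧ IsDegenerate f}.ncard : ℝ) ≤
        C * (H : ℝ) ^ (n - 1) := by
  refine ⟨((2 * n ^ 2)! * n + 1) * 3 ^ (n - 1), by positivity, fun H hH => ?_⟩
  have hS : {f : ℤ[X] | f.Monic ∧ f.natDegree = n ∧ (∀ i, |f.coeff i| ≤ (H : ℤ)) ∧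
      IsDegenerate f} = boundedMonic n H ∩ {f | IsDegenerate f} := by
    ext f
    simp [boundedMonic, and_assoc]
  have hcount : (boundedMonic n H ∩ {f | IsDegenerate f}).ncard ≤
      ((2 * n ^ 2)! * n + 1) * (3 * H) ^ (n - 1) :=
    (ncard_boundedMonic_degenerate_le hn H).trans (by gcongr; omega)
  rw [hS]
  calc (_ : ℝ) ≤ (((2 * n ^ 2)! * n + 1) * (3 * H) ^ (n - 1) : ℕ) := by exact_mod_cast hcount
    _ = _ := by push_cast; ring
end

section
/- For every integer n ≥ 4 and H ≥ 2, the number of monic degenerate polynomials in ℤ[X] of degree n with all coefficients of absolute value at most H is at least ⌊H/2⌋^{n-2}. -/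
open Polynomial

/-! The polynomials `(X ^ 2 + 1) * g` are degenerate, since `i` and `-i` are roots with quotient
`-1`. Taking `g = X ^ (n - 2) + ∑ b_k X ^ k` with `0 ≤ b_k < ⌊H/2⌋` gives `⌊H/2⌋ ^ (n - 2)` distinct
monic polynomials of degree `n`, whose coefficients `b_{k-2} + b_k` are at most `H` in absolute
value. -/

namespace Polynomial

variable {R : Type*}

section Semiring

variable [Semiring R]

theorem finite_setOf_natDegree_le_and_coeff_mem (d : ℕ) {U : Set R} (hU : U.Finite) :
    {f : R[X] | f.natDegree ≤ d ∧ ∀ i, f.coeff i ∈ U}.Finite := by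
  refine Set.Finite.of_finite_image (f := fun f (i : Fin (d + 1)) => f.coeff i)
    ((Set.Finite.pi fun _ => hU).subset ?_) ?_
  · exact Set.image_subset_iff.2 fun f hf i _ => hf.2 i
  · exact fun f hf g hg hfg => (ext_iff_natDegree_le hf.1 hg.1).2 fun i hi =>
      congr_fun hfg ⟨i, Nat.lt_succ_of_le hi⟩

theorem coeff_X_pow_add_one_mul (k : ℕ) (g : R[X]) (i : ℕ) :
    ((X ^ k + 1) * g).coeff i = (if k ≤ i then g.coeff (i - k) else 0) + g.coeff i := by
  rw [add_mul, one_mul, X_pow_mul, coeff_add, coeff_mul_X_pow']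

variable {m : ℕ}

/-- The monic polynomial `X ^ m + ∑ i < m, b i * X ^ i`. -/
noncomputable def monicOfCoeffs (b : Fin m → R) : R[X] :=
  X ^ m + ((degreeLTEquiv R m).symm b : R[X])

theorem degree_degreeLTEquiv_symm_lt (b : Fin m → R) :
    degree ((degreeLTEquiv R m).symm b : R[X]) < m :=
  mem_degreeLT.1 ((degreeLTEquiv R m).symm b).2

theorem monicOfCoeffs_monic (b : Fin m → R) : (monicOfCoeffs b).Monic :=
  monic_X_pow_add (degree_degreeLTEquiv_symm_lt b)

theorem natDegree_monicOfCoeffs [Nontrivial R] (b : Fin m → R) :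
    (monicOfCoeffs b).natDegree = m :=
  natDegree_eq_of_degree_eq_some <| by
    rw [monicOfCoeffs, degree_add_eq_left_of_degree_lt] <;> rw [degree_X_pow]
    exact degree_degreeLTEquiv_symm_lt b

theorem coeff_monicOfCoeffs_of_lt (b : Fin m → R) {k : ℕ} (hk : k < m) :
    (monicOfCoeffs b).coeff k = b ⟨k, hk⟩ := by
  rw [monicOfCoeffs, coeff_add, coeff_X_pow, if_neg hk.ne, zero_add]
  exact congr_fun ((degreeLTEquiv R m).apply_symm_apply b) ⟨k, hk⟩

theorem coeff_monicOfCoeffs_of_le (b : Fin m → R) {k : ℕ} (hk : m ≤ k) :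
    (monicOfCoeffs b).coeff k = if k = m then 1 else 0 := by
  rw [monicOfCoeffs, coeff_add, coeff_X_pow, coeff_eq_zero_of_degree_lt, add_zero]
  exact (degree_degreeLTEquiv_symm_lt b).trans_le (by exact_mod_cast hk)

end Semiring

theorem monicOfCoeffs_injective [Ring R] {m : ℕ} :
    Function.Injective (monicOfCoeffs (R := R) (m := m)) :=
  fun _ _ h => (degreeLTEquiv R m).symm.injective (Subtype.ext (add_left_cancel h))

variable [Ring R] [LinearOrder R] [IsOrderedRing R]

theorem abs_coeff_X_pow_add_one_mul_le {k : ℕ} {g : R[X]} {B : R} (hg : ∀ i, |g.coeff i| ≤ B)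
    (i : ℕ) : |((X ^ k + 1) * g).coeff i| ≤ 2 * B := by
  rw [coeff_X_pow_add_one_mul, two_mul]
  refine (abs_add_le _ _).trans (add_le_add ?_ (hg i))
  split_ifs
  · exact hg _
  · simpa using (abs_nonneg _).trans (hg 0)

theorem abs_coeff_monicOfCoeffs_le {m : ℕ} {b : Fin m → R} {B : R} (hB : 1 ≤ B)
    (hb : ∀ i, |b i| ≤ B) (k : ℕ) : |(monicOfCoeffs b).coeff k| ≤ B := by
  rcases lt_or_ge k m with hk | hk
  · simpa only [coeff_monicOfCoeffs_of_lt b hk] using hb ⟨k, hk⟩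
  · rw [coeff_monicOfCoeffs_of_le b hk]
    split_ifs <;> simp [hB, zero_le_one.trans hB]

end Polynomial

theorem IsDegenerate.of_dvd {p f : ℤ[X]} (hp : IsDegenerate p) (hpf : p ∣ f) : IsDegenerate f := by
  obtain ⟨α, β, hα, hβ, hne, k, hk, hroot⟩ := hp
  obtain ⟨q, rfl⟩ := hpf
  exact ⟨α, β, by simp [hα], by simp [hβ], hne, k, hk, hroot⟩

theorem isDegenerate_X_sq_add_one : IsDegenerate (X ^ 2 + 1) := by
  refine ⟨Complex.I, -Complex.I, by simp, by simp, ?_, 2, two_pos, by simp⟩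
  intro h
  exact Complex.I_ne_zero (by linear_combination h / 2)

/-- For `n ≥ 4` and `H ≥ 2`, there are at least `⌊H/2⌋^{n-2}` monic degenerate integer
polynomials of degree `n` with all coefficients of absolute value at most `H`. -/
theorem degenerate_monic_count_lower (n H : ℕ) (hn : 4 ≤ n) (hH : 2 ≤ H) :
    (H / 2) ^ (n - 2) ≤
      {f : Polynomial ℤ | f.Monic ∧ f.natDegree = n ∧ IsDegenerate f ∧
        ∀ i, |f.coeff i| ≤ (H : ℤ)}.ncard := by
  obtain ⟨m, rfl⟩ : ∃ m, n = m + 2 := ⟨n - 2, by omega⟩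
  set S := {f : Polynomial ℤ | f.Monic ∧ f.natDegree = m + 2 ∧ IsDegenerate f ∧
    ∀ i, |f.coeff i| ≤ (H : ℤ)}
  have hq : (X ^ 2 + 1 : ℤ[X]).Monic := by simpa using monic_X_pow_add_C (1 : ℤ) two_ne_zero
  let F : (Fin m → Fin (H / 2)) → ℤ[X] := fun b => (X ^ 2 + 1) * monicOfCoeffs fun i => (b i : ℤ)
  have hF_inj : F.Injective := fun b b' h => funext fun i => Fin.ext <| by
    exact_mod_cast congr_fun (monicOfCoeffs_injective (mul_left_cancel₀ hq.ne_zero h)) i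
  have hF_mem (b : Fin m → Fin (H / 2)) : F b ∈ S := by
    have hg := monicOfCoeffs_monic fun i => (b i : ℤ)
    refine ⟨hq.mul hg, ?_, isDegenerate_X_sq_add_one.of_dvd (dvd_mul_right _ _), fun i => ?_⟩
    · rw [hq.natDegree_mul hg, natDegree_monicOfCoeffs, add_comm]
      simpa using natDegree_X_pow_add_C (n := 2) (r := (1 : ℤ))
    · have hB : (1 : ℤ) ≤ (H / 2 : ℕ) := by omega
      have hb (j : Fin m) : |((b j : ℕ) : ℤ)| ≤ (H / 2 : ℕ) := by
        rw [Nat.abs_cast]; exact_mod_cast (b j).isLt.le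
      exact (abs_coeff_X_pow_add_one_mul_le (abs_coeff_monicOfCoeffs_le hB hb) i).trans (by omega)
  have hS_fin : S.Finite :=
    (finite_setOf_natDegree_le_and_coeff_mem (m + 2) (Set.finite_Icc (-(H : ℤ)) H)).subset
      fun f hf => ⟨hf.2.1.le, fun i => abs_le.1 (hf.2.2.2 i)⟩
  calc (H / 2) ^ (m + 2 - 2) = (Set.range F).ncard := by
        rw [Set.ncard_range_of_injective hF_inj]; simp
    _ ≤ S.ncard := Set.ncard_le_ncard (Set.range_subset_iff.2 hF_mem) hS_fin
end

section
/- Let g, h ∈ ℤ[X] be monic irreducible non-degenerate quadratic polynomials such that f = g·h is degenerate. Write g(X) = X^2 + uX + v. Then h(X) = X^2 + wX ± v for some integer w; that is, the constant terms of g and h agree up to sign. -/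
open Polynomial

/-! Since `α / β` is a root of unity, `|α| = |β|`. A non-real root `z` of a monic integer
quadratic has `|z|² = z · z̄` equal to the constant term, while a real root has `|z|² = z²`;
irreducibility over `ℚ` makes every root irrational, so an integer relation `a z + b = 0` forces
`a = b = 0`. Comparing `|α|² = |β|²` then yields the claim in each of the four cases according to
which of `α`, `β` are real. -/

open ComplexConjugate

theorem Polynomial.Monic.aeval_eq_of_natDegree_eq_two {R A : Type*} [CommRing R] [CommRing A]
    [Algebra R A] {p : R[X]} (hm : p.Monic) (hd : p.natDegree = 2) (x : A) :
    aeval x p = x ^ 2 + algebraMap R A (p.coeff 1) * x + algebraMap R A (p.coeff 0) := by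
  have hlead : p.coeff 2 = 1 := hd ▸ hm.coeff_natDegree
  rw [aeval_eq_sum_range, hd]
  simp only [Algebra.smul_def, Finset.sum_range_succ, Finset.range_one, Finset.sum_singleton,
    pow_zero, mul_one, pow_one, hlead, map_one, one_mul]
  ring

theorem Polynomial.aeval_ratCast_ne_zero {K : Type*} [Field K] [CharZero K] {p : ℤ[X]}
    (hirr : Irreducible (p.map (Int.castRingHom ℚ))) (hd : p.natDegree ≠ 1) (q : ℚ) :
    aeval (q : K) p ≠ 0 := by
  intro hq
  have hroot : (p.map (Int.castRingHom ℚ)).IsRoot q := by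
    rw [← eq_ratCast (algebraMap ℚ K), aeval_algebraMap_apply, map_eq_zero_iff _
      (algebraMap ℚ K).injective] at hq
    rwa [IsRoot, eval_map, ← algebraMap_int_eq, ← aeval_def]
  have hdeg := degree_eq_one_of_irreducible_of_root hirr hroot
  rw [degree_map_eq_of_injective (RingHom.injective_int _)] at hdeg
  exact hd (natDegree_eq_of_degree_eq_some hdeg)

theorem Polynomial.intCast_mul_add_eq_zero_iff {K : Type*} [Field K] [CharZero K] {p : ℤ[X]}
    (hirr : Irreducible (p.map (Int.castRingHom ℚ))) (hd : p.natDegree ≠ 1) {α : K}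
    (hα : aeval α p = 0) {a b : ℤ} : (a : K) * α + b = 0 ↔ a = 0 ∧ b = 0 := by
  refine ⟨fun hab => ?_, fun ⟨ha, hb⟩ => by simp [ha, hb]⟩
  by_cases ha : a = 0
  · subst ha
    exact ⟨rfl, by simpa using hab⟩
  · have hα_rat : α = ((-b / a : ℚ) : K) := by
      have : (a : K) ≠ 0 := by exact_mod_cast ha
      push_cast
      field_simp
      linear_combination hab
    exact absurd hα (hα_rat ▸ aeval_ratCast_ne_zero hirr hd _)

theorem mul_eq_of_sq_add_mul_add_eq_zero {R : Type*} [CommRing R] [IsDomain R] {u v x y : R}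
    (hne : x ≠ y) (hx : x ^ 2 + u * x + v = 0) (hy : y ^ 2 + u * y + v = 0) : x * y = v := by
  have hsum : x + y + u = 0 := by
    have : (x - y) * (x + y + u) = 0 := by linear_combination hx - hy
    exact (mul_eq_zero.1 this).resolve_left (sub_ne_zero.2 hne)
  linear_combination x * hsum - hx

namespace Complex

theorem normSq_eq_of_div_pow_eq_one {α β : ℂ} {k : ℕ} (hk : k ≠ 0) (h : (α / β) ^ k = 1) :
    normSq α = normSq β := by
  have hβ : β ≠ 0 := by
    rintro rfl
    simp [zero_pow hk] at h
  have hnorm := norm_eq_one_of_pow_eq_one h hk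
  rw [norm_div, div_eq_one_iff_eq (norm_ne_zero_iff.2 hβ)] at hnorm
  rw [normSq_eq_norm_sq, normSq_eq_norm_sq, hnorm]

theorem normSq_eq_of_conj_ne {u v : ℝ} {z : ℂ} (hz : z ^ 2 + u * z + v = 0) (hconj : conj z ≠ z) :
    normSq z = v := by
  have hz' : conj z ^ 2 + u * conj z + v = 0 := by simpa using congrArg conj hz
  exact_mod_cast (mul_conj z).symm.trans (mul_eq_of_sq_add_mul_add_eq_zero hconj.symm hz hz')

theorem normSq_eq_sq_of_conj_eq {z : ℂ} (hconj : conj z = z) : (normSq z : ℂ) = z ^ 2 := by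
  rw [← mul_conj, hconj, sq]

end Complex

section MonicIntQuadratic

variable {g h : ℤ[X]}

theorem Polynomial.Monic.aeval_complex_eq_of_natDegree_eq_two (hm : g.Monic) (hd : g.natDegree = 2)
    (z : ℂ) : aeval z g = z ^ 2 + (g.coeff 1 : ℂ) * z + (g.coeff 0 : ℂ) := by
  simp [hm.aeval_eq_of_natDegree_eq_two hd]

theorem Polynomial.Monic.normSq_eq_coeff_zero_of_conj_ne (hm : g.Monic) (hd : g.natDegree = 2)
    {z : ℂ} (hz : aeval z g = 0) (hconj : conj z ≠ z) : Complex.normSq z = g.coeff 0 := by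
  rw [hm.aeval_complex_eq_of_natDegree_eq_two hd] at hz
  exact_mod_cast Complex.normSq_eq_of_conj_ne (u := g.coeff 1) (by exact_mod_cast hz) hconj

theorem coeff_zero_eq_of_conj_eq_of_conj_eq (hgm : g.Monic) (hgd : g.natDegree = 2)
    (hgirr : Irreducible (g.map (Int.castRingHom ℚ))) (hhm : h.Monic) (hhd : h.natDegree = 2)
    {α β : ℂ} (hα : aeval α g = 0) (hβ : aeval β h = 0) (hαr : conj α = α) (hβr : conj β = β)
    (hnorm : Complex.normSq α = Complex.normSq β) : h.coeff 0 = g.coeff 0 := by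
  have hαq := (hgm.aeval_complex_eq_of_natDegree_eq_two hgd α).symm.trans hα
  have hβq := (hhm.aeval_complex_eq_of_natDegree_eq_two hhd β).symm.trans hβ
  have hirrat {a b : ℤ} (hab : (a : ℂ) * α + b = 0) : b = 0 :=
    ((intCast_mul_add_eq_zero_iff hgirr (by omega) hα).1 hab).2
  have hsq : β ^ 2 = α ^ 2 := by
    rw [← Complex.normSq_eq_sq_of_conj_eq hαr, ← Complex.normSq_eq_sq_of_conj_eq hβr, hnorm]
  rcases sq_eq_sq_iff_eq_or_eq_neg.1 hsq with rfl | rfl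
  · have := hirrat (a := g.coeff 1 - h.coeff 1) (b := g.coeff 0 - h.coeff 0)
      (by push_cast; linear_combination hαq - hβq)
    omega
  · have := hirrat (a := g.coeff 1 + h.coeff 1) (b := g.coeff 0 - h.coeff 0)
      (by push_cast; linear_combination hαq - hβq)
    omega

theorem coeff_zero_eq_neg_of_conj_eq_of_conj_ne (hgm : g.Monic) (hgd : g.natDegree = 2)
    (hgirr : Irreducible (g.map (Int.castRingHom ℚ))) (hhm : h.Monic) (hhd : h.natDegree = 2)
    {α β : ℂ} (hα : aeval α g = 0) (hβ : aeval β h = 0) (hαr : conj α = α) (hβr : conj β ≠ β)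
    (hnorm : Complex.normSq α = Complex.normSq β) : h.coeff 0 = -g.coeff 0 := by
  have hαq := (hgm.aeval_complex_eq_of_natDegree_eq_two hgd α).symm.trans hα
  have hsq : α ^ 2 = h.coeff 0 := by
    rw [← Complex.normSq_eq_sq_of_conj_eq hαr, hnorm,
      hhm.normSq_eq_coeff_zero_of_conj_ne hhd hβ hβr, Complex.ofReal_intCast]
  have := ((intCast_mul_add_eq_zero_iff hgirr (by omega) hα (a := g.coeff 1)
    (b := g.coeff 0 + h.coeff 0)).1 (by push_cast; linear_combination hαq - hsq)).2
  omega

theorem coeff_zero_eq_or_eq_neg_of_normSq_eq (hgm : g.Monic) (hgd : g.natDegree = 2)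
    (hgirr : Irreducible (g.map (Int.castRingHom ℚ))) (hhm : h.Monic) (hhd : h.natDegree = 2)
    (hhirr : Irreducible (h.map (Int.castRingHom ℚ))) {α β : ℂ} (hα : aeval α g = 0)
    (hβ : aeval β h = 0) (hnorm : Complex.normSq α = Complex.normSq β) :
    h.coeff 0 = g.coeff 0 ∨ h.coeff 0 = -g.coeff 0 := by
  by_cases hαr : conj α = α <;> by_cases hβr : conj β = β
  · exact .inl (coeff_zero_eq_of_conj_eq_of_conj_eq hgm hgd hgirr hhm hhd hα hβ hαr hβr hnorm)
  · exact .inr (coeff_zero_eq_neg_of_conj_eq_of_conj_ne hgm hgd hgirr hhm hhd hα hβ hαr hβr hnorm)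
  · have := coeff_zero_eq_neg_of_conj_eq_of_conj_ne hhm hhd hhirr hgm hgd hβ hα hβr hαr hnorm.symm
    exact .inr (by omega)
  · left
    have hgv := hgm.normSq_eq_coeff_zero_of_conj_ne hgd hα hαr
    have hhv := hhm.normSq_eq_coeff_zero_of_conj_ne hhd hβ hβr
    exact_mod_cast hhv.symm.trans (hnorm.symm.trans hgv)

end MonicIntQuadratic

/-- If `g, h ∈ ℤ[X]` are monic irreducible non-degenerate quadratics with `g·h`
degenerate, then the constant terms of `g` and `h` agree up to sign. -/
theorem constant_terms_agree_up_to_sign (g h : Polynomial ℤ)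
    (hgm : g.Monic) (hgd : g.natDegree = 2)
    (hgirr : Irreducible (g.map (Int.castRingHom ℚ))) (hgnd : ¬ IsDegenerate g)
    (hhm : h.Monic) (hhd : h.natDegree = 2)
    (hhirr : Irreducible (h.map (Int.castRingHom ℚ))) (hhnd : ¬ IsDegenerate h)
    (hdeg : IsDegenerate (g * h)) :
    h.coeff 0 = g.coeff 0 ∨ h.coeff 0 = -g.coeff 0 := by
  obtain ⟨α, β, hα, hβ, hne, k, hk, hroot⟩ := hdeg
  have hnorm := Complex.normSq_eq_of_div_pow_eq_one hk.ne' hroot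
  rw [map_mul] at hα hβ
  rcases mul_eq_zero.1 hα with hαg | hαh <;> rcases mul_eq_zero.1 hβ with hβg | hβh
  · exact absurd ⟨α, β, hαg, hβg, hne, k, hk, hroot⟩ hgnd
  · exact coeff_zero_eq_or_eq_neg_of_normSq_eq hgm hgd hgirr hhm hhd hhirr hαg hβh hnorm
  · have := coeff_zero_eq_or_eq_neg_of_normSq_eq hhm hhd hhirr hgm hgd hgirr hαh hβg hnorm
    omega
  · exact absurd ⟨α, β, hαh, hβh, hne, k, hk, hroot⟩ hhnd
end

section
/- For every integer H ≥ 1, the number of irreducible monic degenerate quadratic polynomials in ℤ[X] with coefficients bounded in absolute value by H equals 2H + ⌊√H⌋ + 2⌊√(H/2)⌋ + 2⌊√(H/3)⌋. -/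
/-!
If `α ≠ β` are the complex roots of `X² + aX + b` and `ζ = α / β` is a root of unity, then
`ζ + ζ⁻¹ = (a² - 2b) / b` is a rational algebraic integer of absolute value at most `2`, hence an
integer `n`, and `n ≠ 2` because the roots are distinct. So `a² = m b` with `m ∈ {0, 1, 2, 3}`, and
conversely each of these relations makes `ζ` a root of unity of order `2, 3, 4, 6`. For `m ≥ 1` the
discriminant `(m - 4) b` is negative, so the polynomial is irreducible; for `m = 0` it is
irreducible iff `-b` is not a square. Counting the pairs `(0, b)` with `-b` not a square and
`(m c, m c²)` with `c ≠ 0`, `m c² ≤ H` gives the formula.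
-/

open Polynomial Finset
open scoped Classical

theorem Polynomial.irreducible_X_sq_add_C_mul_X_add_C_iff {K : Type*} [Field K] (a b : K) :
    Irreducible (X ^ 2 + C a * X + C b) ↔ ∀ r, r ^ 2 + a * r + b ≠ 0 := by
  have hdeg : (X ^ 2 + C a * X + C b).natDegree = 2 := by compute_degree!
  have hne : X ^ 2 + C a * X + C b ≠ 0 := ne_zero_of_natDegree_gt (n := 0) (by omega)
  rw [irreducible_iff_roots_eq_zero_of_degree_le_three (by omega) (by omega),
    Multiset.eq_zero_iff_forall_notMem]
  simp [mem_roots hne]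

theorem eq_neg_sub_of_sq_add_mul_add_eq_zero {K : Type*} [Field K] {a b α β : K}
    (hα : α ^ 2 + a * α + b = 0) (hβ : β ^ 2 + a * β + b = 0) (hne : α ≠ β) : β = -a - α := by
  have h : (α - β) * (α + β + a) = 0 := by linear_combination hα - hβ
  linear_combination (mul_eq_zero.1 h).resolve_left (sub_ne_zero.2 hne)

theorem isIntegral_add_inv_of_pow_eq_one {K : Type*} [Field K] {ζ : K} {k : ℕ} (hk : 0 < k)
    (hζ : ζ ^ k = 1) : IsIntegral ℤ (ζ + ζ⁻¹) := by
  have hint : IsIntegral ℤ ζ := ⟨X ^ k - 1, monic_X_pow_sub_C 1 hk.ne', by simp [hζ]⟩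
  have hinv : ζ⁻¹ = ζ ^ (k - 1) :=
    inv_eq_of_mul_eq_one_right (by rw [← pow_succ', Nat.sub_add_cancel hk, hζ])
  exact hint.add (hinv ▸ hint.pow _)

theorem Complex.norm_add_inv_le_two {ζ : ℂ} (hζ : ‖ζ‖ = 1) : ‖ζ + ζ⁻¹‖ ≤ 2 :=
  (norm_add_le _ _).trans (by rw [norm_inv, hζ]; norm_num)

theorem Complex.exists_int_abs_le_two_of_add_inv_eq_ratCast {ζ : ℂ} {k : ℕ} (hk : 0 < k)
    (hζ : ζ ^ k = 1) {q : ℚ} (hq : ζ + ζ⁻¹ = q) : ∃ n : ℤ, q = n ∧ |n| ≤ 2 := by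
  obtain ⟨n, hn⟩ :=
    (IsIntegral.exists_int_iff_exists_rat (isIntegral_add_inv_of_pow_eq_one hk hζ)).1 ⟨q, hq⟩
  refine ⟨n, by exact_mod_cast hq.symm.trans hn, ?_⟩
  have := norm_add_inv_le_two (norm_eq_one_of_pow_eq_one hζ hk.ne')
  rw [hn, norm_intCast] at this
  exact_mod_cast this

theorem aeval_X_sq_add_C_mul_X_add_C {A : Type*} [CommRing A] (a b : ℤ) (z : A) :
    aeval z (X ^ 2 + C a * X + C b) = z ^ 2 + a * z + b := by
  simp

theorem IsDegenerate.exists_sq_eq_mul {a b : ℤ} (h : IsDegenerate (X ^ 2 + C a * X + C b)) :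
    b ≠ 0 ∧ ∃ m : ℕ, m < 4 ∧ a ^ 2 = m * b := by
  obtain ⟨α, β, hα, hβ, hne, k, hk, hζ⟩ := h
  rw [aeval_X_sq_add_C_mul_X_add_C] at hα hβ
  have hβα := eq_neg_sub_of_sq_add_mul_add_eq_zero hα hβ hne
  have hprod : α * β = b := by rw [hβα]; linear_combination -hα
  have hαβ : α / β ≠ 0 := by rintro h; simp [h, zero_pow hk.ne'] at hζ
  obtain ⟨hα0, hβ0⟩ := div_ne_zero_iff.1 hαβ
  have hb : (b : ℂ) ≠ 0 := hprod ▸ mul_ne_zero hα0 hβ0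
  have hsum : α / β + (α / β)⁻¹ = (((a ^ 2 - 2 * b) / b : ℚ) : ℂ) := by
    push_cast
    rw [inv_div, div_add_div _ _ hβ0 hα0, div_eq_div_iff (mul_ne_zero hβ0 hα0) hb]
    rw [hβα] at hprod ⊢
    linear_combination (-(a : ℂ) ^ 2) * hprod
  obtain ⟨n, hq, hn_le⟩ := Complex.exists_int_abs_le_two_of_add_inv_eq_ratCast hk hζ hsum
  have hab : a ^ 2 = (n + 2) * b := by
    have h : ((a ^ 2 - 2 * b : ℤ) : ℚ) = (n * b : ℤ) := by
      push_cast; rwa [div_eq_iff (by exact_mod_cast hb)] at hq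
    linear_combination Int.cast_injective h
  have hn2 : n ≠ 2 := by
    rintro rfl
    apply hne
    have : (α - β) ^ 2 = 0 := by
      rw [hβα] at hprod ⊢
      linear_combination -4 * hprod + (by exact_mod_cast hab : ((a : ℂ) ^ 2 = (2 + 2) * b))
    exact sub_eq_zero.1 (pow_eq_zero_iff two_ne_zero |>.1 this)
  obtain ⟨hn_lo, hn_hi⟩ := abs_le.1 hn_le
  refine ⟨by exact_mod_cast hb, (n + 2).toNat, by omega, ?_⟩
  rw [Int.toNat_of_nonneg (by omega), hab]

theorem isDegenerate_of_sq_eq_mul {a b : ℤ} {m : ℕ} (hm : m < 4) (hb : b ≠ 0)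
    (h : a ^ 2 = m * b) : IsDegenerate (X ^ 2 + C a * X + C b) := by
  obtain ⟨α, hα⟩ : ∃ α : ℂ, α ^ 2 + a * α + b = 0 := by
    obtain ⟨s, hs⟩ := IsAlgClosed.exists_pow_nat_eq ((a : ℂ) ^ 2 - 4 * b) two_pos
    exact ⟨(-a + s) / 2, by linear_combination hs / 4⟩
  obtain ⟨β, hβ⟩ : ∃ β : ℂ, β = -a - α := ⟨_, rfl⟩
  have hprod : α * β = b := by rw [hβ]; linear_combination -hα
  have hβ0 : β ≠ 0 := by
    rintro h0
    rw [h0, mul_zero] at hprod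
    exact hb (by exact_mod_cast hprod.symm)
  have hm : (α + β) ^ 2 = m * (α * β) := by
    rw [hprod, hβ]; linear_combination (by exact_mod_cast h : (a : ℂ) ^ 2 = m * b)
  have hne : α ≠ β := by
    rintro rfl
    have : ((4 : ℂ) - m) * α ^ 2 = 0 := by linear_combination hm
    rcases mul_eq_zero.1 this with h4 | hα0
    · have : (m : ℂ) = 4 := by linear_combination -h4
      norm_cast at this; omega
    · exact hβ0 (pow_eq_zero_iff two_ne_zero |>.1 hα0)
  obtain ⟨k, hk, hpow⟩ : ∃ k : ℕ, 0 < k ∧ α ^ k = β ^ k := by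
    interval_cases m
    · have hsum : α + β = 0 := pow_eq_zero_iff two_ne_zero |>.1 (by simpa using hm)
      exact ⟨2, two_pos, by linear_combination (α - β) * hsum⟩
    · exact ⟨3, three_pos, by linear_combination (α - β) * hm⟩
    · exact ⟨4, four_pos, by linear_combination (α ^ 2 - β ^ 2) * hm⟩
    · exact ⟨6, by norm_num, by linear_combination (α ^ 3 - β ^ 3) * (α + β) * hm⟩
  refine ⟨α, β, ?_, ?_, hne, k, hk, ?_⟩
  · rwa [aeval_X_sq_add_C_mul_X_add_C]
  · rw [aeval_X_sq_add_C_mul_X_add_C, hβ]; linear_combination hα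
  · rw [div_pow, hpow, div_self (pow_ne_zero k hβ0)]

theorem irreducible_map_X_sq_add_C_mul_X_add_C_iff (a b : ℤ) :
    Irreducible ((X ^ 2 + C a * X + C b : ℤ[X]).map (Int.castRingHom ℚ)) ↔
      ∀ r : ℚ, r ^ 2 + a * r + b ≠ 0 := by
  simpa using irreducible_X_sq_add_C_mul_X_add_C_iff (a : ℚ) b

theorem sq_add_mul_add_ne_zero_of_sq_lt {K : Type*} [Field K] [LinearOrder K]
    [IsStrictOrderedRing K] {a b : K} (h : a ^ 2 < 4 * b) (r : K) : r ^ 2 + a * r + b ≠ 0 :=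
  fun h0 => by nlinarith [sq_nonneg (2 * r + a)]

theorem irreducible_map_of_sq_eq_mul {a b : ℤ} {m : ℕ} (hm : 0 < m) (hm4 : m < 4) (hb : b ≠ 0)
    (h : a ^ 2 = m * b) :
    Irreducible ((X ^ 2 + C a * X + C b : ℤ[X]).map (Int.castRingHom ℚ)) := by
  have hb_pos : 0 < b := by
    rcases hb.lt_or_gt with hb_neg | hb_pos
    · nlinarith [sq_nonneg a]
    · exact hb_pos
  rw [irreducible_map_X_sq_add_C_mul_X_add_C_iff]
  exact sq_add_mul_add_ne_zero_of_sq_lt (by exact_mod_cast (by nlinarith : a ^ 2 < 4 * b))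

theorem irreducible_map_X_sq_add_C_iff (b : ℤ) :
    Irreducible ((X ^ 2 + C 0 * X + C b : ℤ[X]).map (Int.castRingHom ℚ)) ↔ ¬IsSquare (-b) := by
  rw [irreducible_map_X_sq_add_C_mul_X_add_C_iff, ← Rat.isSquare_intCast_iff]
  simp only [Int.cast_zero, zero_mul, add_zero, IsSquare, not_exists, Int.cast_neg]
  exact forall_congr' fun r => not_congr
    ⟨fun h => by linear_combination -h, fun h => by linear_combination -h⟩

theorem isDegenerate_X_sq_add_C_mul_X_add_C_iff {a b : ℤ} :
    IsDegenerate (X ^ 2 + C a * X + C b) ↔ b ≠ 0 ∧ ∃ m : ℕ, m < 4 ∧ a ^ 2 = m * b :=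
  ⟨IsDegenerate.exists_sq_eq_mul, fun ⟨hb, _, hm, h⟩ => isDegenerate_of_sq_eq_mul hm hb h⟩

theorem irreducible_map_and_isDegenerate_iff (a b : ℤ) :
    Irreducible ((X ^ 2 + C a * X + C b : ℤ[X]).map (Int.castRingHom ℚ)) ∧
        IsDegenerate (X ^ 2 + C a * X + C b) ↔
      (a = 0 ∧ ¬IsSquare (-b)) ∨ (b ≠ 0 ∧ a ^ 2 = b) ∨ (b ≠ 0 ∧ a ^ 2 = 2 * b) ∨
        (b ≠ 0 ∧ a ^ 2 = 3 * b) := by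
  rw [isDegenerate_X_sq_add_C_mul_X_add_C_iff]
  constructor
  · rintro ⟨hirr, hb, m, hm, h⟩
    interval_cases m
    · obtain rfl : a = 0 := pow_eq_zero_iff two_ne_zero |>.1 (by simpa using h)
      exact Or.inl ⟨rfl, (irreducible_map_X_sq_add_C_iff b).1 hirr⟩
    · exact Or.inr (Or.inl ⟨hb, by simpa using h⟩)
    · exact Or.inr (Or.inr (Or.inl ⟨hb, by simpa using h⟩))
    · exact Or.inr (Or.inr (Or.inr ⟨hb, by simpa using h⟩))
  · rintro (⟨rfl, hsq⟩ | hdeg)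
    · refine ⟨(irreducible_map_X_sq_add_C_iff b).2 hsq, fun hb => hsq ⟨0, by simp [hb]⟩, 0, ?_⟩
      simp
    · obtain ⟨m, hm0, hm4, hb, h⟩ : ∃ m : ℕ, 0 < m ∧ m < 4 ∧ b ≠ 0 ∧ a ^ 2 = m * b := by
        rcases hdeg with ⟨hb, h⟩ | ⟨hb, h⟩ | ⟨hb, h⟩
        exacts [⟨1, one_pos, by norm_num, hb, by simpa using h⟩,
          ⟨2, two_pos, by norm_num, hb, by simpa using h⟩,
          ⟨3, three_pos, by norm_num, hb, by simpa using h⟩]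
      exact ⟨irreducible_map_of_sq_eq_mul hm0 hm4 hb h, hb, m, hm4, h⟩

theorem Int.natAbs_le_sqrt_div_iff {m : ℕ} (hm : 0 < m) (H : ℕ) (c : ℤ) :
    c.natAbs ≤ Nat.sqrt (H / m) ↔ m * c ^ 2 ≤ H := by
  rw [Nat.le_sqrt', Nat.le_div_iff_mul_le hm, ← Int.natAbs_sq, mul_comm]
  norm_cast

theorem card_filter_sq_eq_mul (H : ℕ) {m : ℕ} (hm : Squarefree m) :
    ((Icc (-(H : ℤ)) H ×ˢ Icc (-(H : ℤ)) H).filter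
      fun p => p.2 ≠ 0 ∧ p.1 ^ 2 = (m : ℤ) * p.2).card = 2 * Nat.sqrt (H / m) := by
  have hm0 : (m : ℤ) ≠ 0 := by exact_mod_cast hm.ne_zero
  have hbound := Int.natAbs_le_sqrt_div_iff (Nat.pos_of_ne_zero hm.ne_zero) H
  have himage : ((Icc (-(H : ℤ)) H ×ˢ Icc (-(H : ℤ)) H).filter
      fun p => p.2 ≠ 0 ∧ p.1 ^ 2 = (m : ℤ) * p.2) =
      ((Icc (-(Nat.sqrt (H / m) : ℤ)) (Nat.sqrt (H / m))).erase 0).image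
        fun c : ℤ => ((m : ℤ) * c, (m : ℤ) * c ^ 2) := by
    ext ⟨a, b⟩
    simp only [mem_filter, mem_product, mem_Icc, mem_image, mem_erase, Prod.mk.injEq]
    constructor
    · rintro ⟨⟨-, -, hb⟩, hb0, h⟩
      obtain ⟨c, rfl⟩ : (m : ℤ) ∣ a :=
        ((Int.squarefree_natCast.2 hm).dvd_pow_iff_dvd two_ne_zero).1 ⟨b, h⟩
      obtain rfl : b = m * c ^ 2 := mul_left_cancel₀ hm0 (by linear_combination -h)
      have := (hbound c).2 hb
      exact ⟨c, ⟨by rintro rfl; simp at hb0, by omega, by omega⟩, rfl, rfl⟩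
    · rintro ⟨c, ⟨hc0, hc⟩, rfl, rfl⟩
      have hcH := (hbound c).1 (by omega)
      have : 0 < c ^ 2 := by positivity
      refine ⟨⟨⟨?_, ?_⟩, by nlinarith, hcH⟩, by positivity, by ring⟩ <;>
        nlinarith [Int.le_self_sq c, Int.le_self_sq (-c)]
  rw [himage, card_image_of_injective _ fun c d h => mul_left_cancel₀ hm0 (Prod.mk.inj h).1,
    card_erase_of_mem (by simp), Int.card_Icc]
  omega

theorem card_filter_isSquare_neg (H : ℕ) :
    ((Icc (-(H : ℤ)) H).filter fun b => IsSquare (-b)).card = Nat.sqrt H + 1 := by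
  have himage : (Icc (-(H : ℤ)) H).filter (fun b => IsSquare (-b)) =
      (range (Nat.sqrt H + 1)).image fun k : ℕ => -(k : ℤ) ^ 2 := by
    ext b
    simp only [mem_filter, mem_Icc, mem_image, mem_range, Nat.lt_succ_iff, Nat.le_sqrt']
    constructor
    · rintro ⟨⟨hb, -⟩, r, hr⟩
      refine ⟨r.natAbs, ?_, by rw [Int.natAbs_sq]; linear_combination hr⟩
      zify; rw [sq_abs]; nlinarith
    · rintro ⟨k, hk, rfl⟩
      have : ((k ^ 2 : ℕ) : ℤ) ≤ H := by exact_mod_cast hk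
      push_cast at this
      exact ⟨⟨by linarith, by nlinarith⟩, k, by ring⟩
  rw [himage, card_image_of_injective _ fun k l h => by simpa using h, card_range]

theorem card_filter_eq_zero_and_not_isSquare_neg (H : ℕ) :
    ((Icc (-(H : ℤ)) H ×ˢ Icc (-(H : ℤ)) H).filter
      fun p => p.1 = 0 ∧ ¬IsSquare (-p.2)).card = 2 * H - Nat.sqrt H := by
  have hcard := card_filter_add_card_filter_not (s := Icc (-(H : ℤ)) H) fun b => IsSquare (-b)
  rw [card_filter_isSquare_neg, Int.card_Icc] at hcard
  rw [filter_product (fun a : ℤ => a = 0) (fun b : ℤ => ¬IsSquare (-b)), card_product,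
    filter_eq', if_pos (by simp), card_singleton]
  omega

theorem count_irreducible_degenerate_quadratic_general (H : ℕ) :
    ((Finset.Icc (-(H : ℤ)) H ×ˢ Finset.Icc (-(H : ℤ)) H).filter fun p =>
      Irreducible ((X ^ 2 + C p.1 * X + C p.2 : Polynomial ℤ).map (Int.castRingHom ℚ)) ∧
      IsDegenerate (X ^ 2 + C p.1 * X + C p.2)).card =
    2 * H + Nat.sqrt H + 2 * Nat.sqrt (H / 2) + 2 * Nat.sqrt (H / 3) := by
  have h1 := card_filter_sq_eq_mul H squarefree_one
  have h2 := card_filter_sq_eq_mul H Nat.prime_two.squarefree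
  have h3 := card_filter_sq_eq_mul H Nat.prime_three.squarefree
  simp only [Nat.cast_one, one_mul, Nat.div_one, Nat.cast_ofNat] at h1 h2 h3
  rw [filter_congr fun p _ => irreducible_map_and_isDegenerate_iff p.1 p.2, filter_or, filter_or,
    filter_or, card_union_of_disjoint, card_union_of_disjoint, card_union_of_disjoint,
    card_filter_eq_zero_and_not_isSquare_neg, h1, h2, h3]
  · have := Nat.sqrt_le_self H
    omega
  all_goals
    simp only [disjoint_union_right, disjoint_filter]
    grind

/-- The number of irreducible monic degenerate quadratics `X² + aX + b ∈ ℤ[X]` with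
`|a|, |b| ≤ H` equals `2H + ⌊√H⌋ + 2⌊√(H/2)⌋ + 2⌊√(H/3)⌋`. -/
theorem count_irreducible_degenerate_quadratic (H : ℕ) (hH : 1 ≤ H) :
    ((Finset.Icc (-(H : ℤ)) H ×ˢ Finset.Icc (-(H : ℤ)) H).filter fun p =>
      Irreducible ((X ^ 2 + C p.1 * X + C p.2 : Polynomial ℤ).map (Int.castRingHom ℚ)) ∧
      IsDegenerate (X ^ 2 + C p.1 * X + C p.2)).card =
    2 * H + Nat.sqrt H + 2 * Nat.sqrt (H / 2) + 2 * Nat.sqrt (H / 3) :=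
  count_irreducible_degenerate_quadratic_general H
end

section
/- For every integer H ≥ 1, the number of degenerate reducible polynomials aX^2 + bX + c ∈ ℤ[X] with a ≠ 0 and |a|, |b|, |c| ≤ H equals 2·Σ ⌊√(H/k)⌋², where the sum runs over square-free positive integers k ≤ H. In particular this count is ≫ H log H and ≪ H log H. -/
/-!
If `aX² + bX + c` is reducible over `ℚ`, one root is rational and hence so is the other
(their sum is `-b/a`); a rational root of unity other than `1` is `-1`, so the two roots are
`±r`. Hence the degenerate reducible quadratics are exactly those with `b = 0` and `-ac` a
nonzero square. Writing `|a| = k m²` and `|c| = k' n²` with `k, k'` squarefree, `|ac|` is a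
square iff `k = k'`, which gives the formula. Each term `⌊√(H/k)⌋²` lies between `H/(8k)` and
`H/k`, and `∑_{k ≤ H squarefree} 1/k ≍ log H` because every `j ≤ H` is some `k m²` and
`∑ 1/m² ≤ 2`.
-/

open Polynomial Finset
open scoped Classical

/-- The number of degenerate reducible quadratics `aX² + bX + c ∈ ℤ[X]` with `a ≠ 0` and
`|a|, |b|, |c| ≤ H`. -/
noncomputable def R2star (H : ℕ) : ℕ :=
  ((Finset.Icc (-(H : ℤ)) H ×ˢ Finset.Icc (-(H : ℤ)) H ×ˢ Finset.Icc (-(H : ℤ)) H).filter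
    fun p => p.1 ≠ 0 ∧
      IsDegenerate (C p.1 * X ^ 2 + C p.2.1 * X + C p.2.2) ∧
      ¬ Irreducible ((C p.1 * X ^ 2 + C p.2.1 * X + C p.2.2 : Polynomial ℤ).map
        (Int.castRingHom ℚ))).card

theorem aeval_quadratic {A : Type*} [CommRing A] (a b c : ℤ) (x : A) :
    aeval x (C a * X ^ 2 + C b * X + C c) = a * x ^ 2 + b * x + c := by
  simp

theorem map_quadratic (a b c : ℤ) :
    (C a * X ^ 2 + C b * X + C c).map (Int.castRingHom ℚ) =
      C (a : ℚ) * X ^ 2 + C (b : ℚ) * X + C (c : ℚ) := by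
  simp

section Quadratic

variable {K : Type*} [Field K] {a b c : K}

theorem not_irreducible_quadratic_iff_exists_root (ha : a ≠ 0) :
    ¬ Irreducible (C a * X ^ 2 + C b * X + C c) ↔ ∃ r, a * r ^ 2 + b * r + c = 0 := by
  have hdeg : (C a * X ^ 2 + C b * X + C c).natDegree = 2 := natDegree_quadratic ha
  have hne : C a * X ^ 2 + C b * X + C c ≠ 0 := ne_zero_of_natDegree_gt (n := 0) (by omega)
  rw [irreducible_iff_roots_eq_zero_of_degree_le_three (by omega) (by omega),
    Multiset.eq_zero_iff_forall_notMem]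
  simp [mem_roots hne]

theorem quadratic_vieta {α β : K} (hα : a * α ^ 2 + b * α + c = 0)
    (hβ : a * β ^ 2 + b * β + c = 0) (hne : α ≠ β) :
    a * (α + β) = -b ∧ c = a * α * β := by
  have hsum : a * (α + β) = -b := by
    have : (α - β) * (a * (α + β) + b) = 0 := by linear_combination hα - hβ
    linear_combination (mul_eq_zero.mp this).resolve_left (sub_ne_zero.mpr hne)
  exact ⟨hsum, by linear_combination hα - α * hsum⟩

theorem quadratic_eq_zero_iff_of_roots {α β : K} (ha : a ≠ 0) (hα : a * α ^ 2 + b * α + c = 0)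
    (hβ : a * β ^ 2 + b * β + c = 0) (hne : α ≠ β) (γ : K) :
    a * γ ^ 2 + b * γ + c = 0 ↔ γ = α ∨ γ = β := by
  obtain ⟨hsum, hprod⟩ := quadratic_vieta hα hβ hne
  have hfac : a * γ ^ 2 + b * γ + c = a * ((γ - α) * (γ - β)) := by
    linear_combination γ * hsum + hprod
  simp [hfac, ha, sub_eq_zero]

end Quadratic

theorem exists_ratCast_eq_of_quadratic {a b c : ℚ} {α β : ℂ} (ha : a ≠ 0)
    (hα : a * α ^ 2 + b * α + c = 0) (hβ : a * β ^ 2 + b * β + c = 0) (hne : α ≠ β) {r : ℚ}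
    (hr : a * r ^ 2 + b * r + c = 0) : ∃ p q : ℚ, (p : ℂ) = α ∧ (q : ℂ) = β := by
  have hsum := (quadratic_vieta hα hβ hne).1
  have haC : (a : ℂ) ≠ 0 := by exact_mod_cast ha
  have hrC : (a : ℂ) * (r : ℂ) ^ 2 + b * r + c = 0 := by exact_mod_cast hr
  rcases (quadratic_eq_zero_iff_of_roots haC hα hβ hne _).mp hrC with h | h
  · refine ⟨r, -b / a - r, h, ?_⟩
    push_cast
    field_simp
    linear_combination -a * h - hsum
  · refine ⟨-b / a - r, r, ?_, h⟩
    push_cast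
    field_simp
    linear_combination -a * h - hsum

theorem eq_neg_of_div_pow_eq_one {F : Type*} [Field F] [LinearOrder F] [IsStrictOrderedRing F]
    {p q : F} (hne : p ≠ q) {k : ℕ} (hk : k ≠ 0) (h : (p / q) ^ k = 1) : p = -q := by
  have hq : q ≠ 0 := by
    rintro rfl
    simp [zero_pow hk] at h
  rcases (pow_eq_one_iff_of_ne_zero hk).mp h with h1 | ⟨h1, -⟩
  · exact absurd ((div_eq_one_iff_eq hq).mp h1) hne
  · rwa [div_eq_iff hq, neg_one_mul] at h1

theorem quadratic_eq_zero_of_neg_mul_eq_mul_self {F : Type*} [Field F] {a c s : F} (ha : a ≠ 0)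
    (h : -(a * c) = s * s) : a * (s / a) ^ 2 + c = 0 := by
  field_simp
  linear_combination -h

theorem isDegenerate_and_not_irreducible_iff (a b c : ℤ) :
    (a ≠ 0 ∧ IsDegenerate (C a * X ^ 2 + C b * X + C c) ∧
      ¬ Irreducible ((C a * X ^ 2 + C b * X + C c).map (Int.castRingHom ℚ))) ↔
    b = 0 ∧ a * c < 0 ∧ IsSquare (-(a * c)) := by
  rw [map_quadratic]
  constructor
  · rintro ⟨ha, ⟨α, β, hα, hβ, hne, k, hk, hunit⟩, hred⟩
    simp only [aeval_quadratic] at hα hβ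
    have haQ : (a : ℚ) ≠ 0 := by exact_mod_cast ha
    obtain ⟨r, hr⟩ := (not_irreducible_quadratic_iff_exists_root haQ).mp hred
    obtain ⟨p, q, rfl, rfl⟩ := exists_ratCast_eq_of_quadratic haQ (by exact_mod_cast hα)
      (by exact_mod_cast hβ) hne hr
    obtain rfl : p = -q := eq_neg_of_div_pow_eq_one (by exact_mod_cast hne) hk.ne'
      (by exact_mod_cast hunit)
    have hq : q ≠ 0 := by rintro rfl; simp at hne
    obtain ⟨hsum, hprod⟩ := quadratic_vieta (K := ℚ) (by exact_mod_cast hα)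
      (by exact_mod_cast hβ) (by exact_mod_cast hne)
    have hac : ((-(a * c) : ℤ) : ℚ) = (a * q) ^ 2 := by push_cast [hprod]; ring
    refine ⟨by exact_mod_cast (by linear_combination hsum : (b : ℚ) = 0), ?_, ?_⟩
    · have : (0 : ℚ) < ((-(a * c) : ℤ) : ℚ) := by rw [hac]; positivity
      exact neg_pos.mp (by exact_mod_cast this)
    · rw [← Rat.isSquare_intCast_iff, hac]
      exact IsSquare.sq _
  · rintro ⟨rfl, hac, s, hs⟩
    have ha : a ≠ 0 := by rintro rfl; simp at hac
    have hs0 : s ≠ 0 := by rintro rfl; linarith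
    have haC : (a : ℂ) ≠ 0 := by exact_mod_cast ha
    have hsC : -((a : ℂ) * c) = s * s := by exact_mod_cast hs
    have hsa : (s : ℂ) / a ≠ 0 := div_ne_zero (by exact_mod_cast hs0) haC
    refine ⟨ha, ⟨s / a, -(s / a), ?_, ?_, ?_, 2, two_pos, ?_⟩, ?_⟩
    · simpa using quadratic_eq_zero_of_neg_mul_eq_mul_self haC hsC
    · simpa [neg_div] using quadratic_eq_zero_of_neg_mul_eq_mul_self haC
        (s := -(s : ℂ)) (by rw [neg_mul_neg, hsC])
    · simpa [CharZero.eq_neg_self_iff] using hsa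
    · rw [div_neg_self hsa]
      norm_num
    · refine (not_irreducible_quadratic_iff_exists_root (by exact_mod_cast ha)).mpr ⟨s / a, ?_⟩
      simpa using quadratic_eq_zero_of_neg_mul_eq_mul_self (F := ℚ) (by exact_mod_cast ha)
        (s := s) (by exact_mod_cast hs)

namespace Nat

theorem isSquare_of_isSquare_mul_sq {x y : ℕ} (hy : y ≠ 0) (h : IsSquare (x * y ^ 2)) :
    IsSquare x := by
  obtain ⟨s, hs⟩ := h
  obtain ⟨t, rfl⟩ : y ∣ s := (Nat.pow_dvd_pow_iff two_ne_zero).mp ⟨x, by rw [sq s, ← hs, mul_comm]⟩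
  exact ⟨t, Nat.eq_of_mul_eq_mul_right (pow_pos (Nat.pos_of_ne_zero hy) 2) (by rw [hs]; ring)⟩

theorem dvd_of_squarefree_of_isSquare_mul {x y : ℕ} (hx : Squarefree x) (h : IsSquare (x * y)) :
    x ∣ y := by
  obtain ⟨s, hs⟩ := h
  obtain ⟨t, rfl⟩ : x ∣ s := (hx.dvd_pow_iff_dvd two_ne_zero).mp ⟨y, by rw [sq, ← hs]⟩
  exact ⟨t * t, Nat.eq_of_mul_eq_mul_left (Nat.pos_of_ne_zero hx.ne_zero) (by rw [hs]; ring)⟩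

theorem eq_of_squarefree_of_isSquare_mul {k k' : ℕ} (hk : Squarefree k) (hk' : Squarefree k')
    (h : IsSquare (k * k')) : k = k' :=
  Nat.dvd_antisymm (dvd_of_squarefree_of_isSquare_mul hk h)
    (dvd_of_squarefree_of_isSquare_mul hk' (by rwa [mul_comm]))

theorem eq_of_squarefree_of_isSquare_mul_sq_mul_sq {k k' m n : ℕ} (hk : Squarefree k)
    (hk' : Squarefree k') (hm : m ≠ 0) (hn : n ≠ 0) (h : IsSquare (k * m ^ 2 * (k' * n ^ 2))) :
    k = k' :=
  eq_of_squarefree_of_isSquare_mul hk hk' <|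
    isSquare_of_isSquare_mul_sq (mul_ne_zero hm hn) (by convert h using 1; ring)

theorem squarefree_mul_sq_inj {k k' m n : ℕ} (hk : Squarefree k) (hk' : Squarefree k')
    (hm : m ≠ 0) (hn : n ≠ 0) (h : k * m ^ 2 = k' * n ^ 2) : k = k' ∧ m = n := by
  obtain rfl := eq_of_squarefree_of_isSquare_mul_sq_mul_sq hk hk' hm hn ⟨k * m ^ 2, by rw [← h]⟩
  exact ⟨rfl, Nat.pow_left_injective two_ne_zero (Nat.eq_of_mul_eq_mul_left
    (Nat.pos_of_ne_zero hk.ne_zero) h)⟩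

theorem le_sqrt_div_iff {k m H : ℕ} (hk : 0 < k) : m ≤ Nat.sqrt (H / k) ↔ k * m ^ 2 ≤ H := by
  rw [Nat.le_sqrt', Nat.le_div_iff_mul_le hk, mul_comm]

theorem le_four_mul_sqrt_sq {n : ℕ} (hn : n ≠ 0) : n ≤ 4 * Nat.sqrt n ^ 2 := by
  have h1 : 1 ≤ Nat.sqrt n := Nat.sqrt_pos.mpr (Nat.pos_of_ne_zero hn)
  have h2 := Nat.lt_succ_sqrt' n
  rw [Nat.succ_eq_add_one] at h2
  nlinarith

theorem mul_sqrt_div_sq_le (H k : ℕ) : k * Nat.sqrt (H / k) ^ 2 ≤ H :=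
  (Nat.mul_le_mul_left k (Nat.sqrt_le' _)).trans (Nat.mul_div_le H k)

theorem le_eight_mul_mul_sqrt_div_sq {H k : ℕ} (hk : 0 < k) (hkH : k ≤ H) :
    H ≤ 8 * (k * Nat.sqrt (H / k) ^ 2) := by
  have hq : 1 ≤ H / k := (Nat.one_le_div_iff hk).mpr hkH
  have h1 := Nat.lt_mul_div_succ H hk
  have h2 := le_four_mul_sqrt_sq (Nat.one_le_iff_ne_zero.mp hq)
  nlinarith

end Nat

theorem card_filter_isSquare_mul (H : ℕ) :
    #{p ∈ Icc 1 H ×ˢ Icc 1 H | IsSquare (p.1 * p.2)} =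
      ∑ k ∈ Icc 1 H with Squarefree k, Nat.sqrt (H / k) ^ 2 := by
  set T := (Icc 1 H).filter Squarefree |>.sigma fun k =>
    Icc 1 (Nat.sqrt (H / k)) ×ˢ Icc 1 (Nat.sqrt (H / k))
  have hT : #T = ∑ k ∈ Icc 1 H with Squarefree k, Nat.sqrt (H / k) ^ 2 := by
    simp [T, card_sigma, sq]
  rw [← hT]
  symm
  refine card_bij (fun x _ => (x.1 * x.2.1 ^ 2, x.1 * x.2.2 ^ 2)) ?_ ?_ ?_
  · rintro ⟨k, m, n⟩ hx
    simp only [T, mem_sigma, mem_filter, mem_Icc, mem_product] at hx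
    obtain ⟨⟨⟨hk, -⟩, -⟩, ⟨hm, hmH⟩, hn, hnH⟩ := hx
    rw [Nat.le_sqrt_div_iff hk] at hmH hnH
    simp only [mem_filter, mem_product, mem_Icc]
    refine ⟨⟨⟨Nat.one_le_iff_ne_zero.mpr (by positivity), hmH⟩,
      Nat.one_le_iff_ne_zero.mpr (by positivity), hnH⟩, k * m * n, by ring⟩
  · rintro ⟨k, m, n⟩ hx ⟨k', m', n'⟩ hx' h
    simp only [T, mem_sigma, mem_filter, mem_Icc, mem_product] at hx hx'
    simp only [Prod.mk.injEq] at h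
    obtain ⟨rfl, rfl⟩ := Nat.squarefree_mul_sq_inj hx.1.2 hx'.1.2 (by omega) (by omega) h.1
    obtain rfl := (Nat.squarefree_mul_sq_inj hx.1.2 hx.1.2 (by omega) (by omega) h.2).2
    rfl
  · rintro ⟨a, c⟩ hp
    simp only [mem_filter, mem_product, mem_Icc] at hp
    obtain ⟨⟨⟨ha, haH⟩, hc, hcH⟩, hsq⟩ := hp
    obtain ⟨k, m, hk, hm, rfl, hsf⟩ := Nat.sq_mul_squarefree_of_pos ha
    obtain ⟨k', n, -, hn, rfl, hsf'⟩ := Nat.sq_mul_squarefree_of_pos hc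
    obtain rfl := Nat.eq_of_squarefree_of_isSquare_mul_sq_mul_sq hsf hsf' hm.ne' hn.ne'
      (by convert hsq using 1; ring)
    refine ⟨⟨k, m, n⟩, ?_, by simp only [mul_comm]⟩
    simp only [T, mem_sigma, mem_filter, mem_Icc, mem_product, Nat.le_sqrt_div_iff hk]
    refine ⟨⟨⟨hk, le_trans (Nat.le_mul_of_pos_left k (by positivity)) haH⟩, hsf⟩,
      ⟨hm, by linarith⟩, hn, by linarith⟩

theorem card_filter_isSquare_neg_mul (H : ℕ) :
    #{p ∈ Icc (-(H : ℤ)) H ×ˢ Icc (-(H : ℤ)) H | p.1 * p.2 < 0 ∧ IsSquare (-(p.1 * p.2))} =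
      2 * #{p ∈ Icc 1 H ×ˢ Icc 1 H | IsSquare (p.1 * p.2)} := by
  set A := {p ∈ Icc (-(H : ℤ)) H ×ˢ Icc (-(H : ℤ)) H | p.1 * p.2 < 0 ∧ IsSquare (-(p.1 * p.2))}
  have hneg : #{p ∈ A | ¬0 < p.1} = #{p ∈ A | 0 < p.1} := by
    refine card_nbij' (fun p => -p) (fun p => -p) ?_ ?_ (fun p _ => neg_neg p)
      (fun p _ => neg_neg p) <;>
    · rintro ⟨a, c⟩
      simp only [A, coe_filter, mem_filter, mem_product, mem_Icc, Set.mem_ofPred_eq, Prod.fst_neg,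
        Prod.snd_neg, neg_mul_neg]
      grind
  have hpos : #{p ∈ A | 0 < p.1} = #{p ∈ Icc 1 H ×ˢ Icc 1 H | IsSquare (p.1 * p.2)} := by
    have key {a c : ℤ} (ha : 0 < a) (hc : c < 0) :
        IsSquare (-(a * c)) ↔ IsSquare (a.natAbs * c.natAbs) := by
      rw [← Int.isSquare_natCast_iff, Nat.cast_mul, Int.natCast_natAbs, Int.natCast_natAbs,
        abs_of_pos ha, abs_of_neg hc, mul_neg]
    refine card_nbij' (fun p => (p.1.natAbs, p.2.natAbs)) (fun p => (p.1, -p.2)) ?_ ?_ ?_ ?_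
    · rintro ⟨a, c⟩
      simp only [A, coe_filter, mem_filter, mem_product, mem_Icc, Set.mem_ofPred_eq]
      rintro ⟨⟨hbox, hac, hsq⟩, ha⟩
      have hc : c < 0 := neg_of_mul_neg_right hac ha.le
      exact ⟨by omega, (key ha hc).mp hsq⟩
    · rintro ⟨x, y⟩
      simp only [A, coe_filter, mem_filter, mem_product, mem_Icc, Set.mem_ofPred_eq]
      rintro ⟨hbox, hsq⟩
      have hx : (0 : ℤ) < x := by omega
      have hy : -(y : ℤ) < 0 := by omega
      refine ⟨⟨by omega, mul_neg_of_pos_of_neg hx hy, (key hx hy).mpr (by simpa using hsq)⟩, hx⟩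
    · rintro ⟨a, c⟩
      simp only [A, coe_filter, mem_filter, Set.mem_ofPred_eq]
      rintro ⟨⟨-, hac, -⟩, ha⟩
      have hc : c < 0 := neg_of_mul_neg_right hac ha.le
      simp only [Prod.mk.injEq]; omega
    · rintro ⟨x, y⟩ -
      simp
  rw [← card_filter_add_card_filter_not (s := A) (fun p => 0 < p.1), hneg, hpos]
  ring

theorem R2star_eq_two_mul_sum (H : ℕ) :
    R2star H = 2 * ∑ k ∈ Icc 1 H with Squarefree k, Nat.sqrt (H / k) ^ 2 := by
  rw [← card_filter_isSquare_mul, ← card_filter_isSquare_neg_mul, R2star,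
    filter_congr fun p _ => isDegenerate_and_not_irreducible_iff p.1 p.2.1 p.2.2]
  refine card_nbij' (fun p => (p.1, p.2.2)) (fun p => (p.1, 0, p.2)) ?_ ?_ ?_ ?_
  · rintro ⟨a, b, c⟩
    simp only [coe_filter, mem_product, mem_Icc, Set.mem_ofPred_eq]
    tauto
  · rintro ⟨a, c⟩
    simp only [coe_filter, mem_product, mem_Icc, Set.mem_ofPred_eq]
    intro h
    exact ⟨⟨h.1.1, by omega, h.1.2⟩, trivial, h.2⟩
  · rintro ⟨a, b, c⟩ h
    simp only [coe_filter, Set.mem_ofPred_eq] at h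
    simp [h.2.1]
  · intro p _
    rfl

theorem log_add_one_le_two_mul_sum_squarefree_inv (M : ℕ) :
    Real.log (M + 1) ≤ 2 * ∑ k ∈ Icc 1 M with Squarefree k, (k : ℝ)⁻¹ := by
  set T := (Icc 1 M).filter Squarefree ×ˢ Icc 1 M
  have hcover : Icc 1 M ⊆ T.image (fun km : ℕ × ℕ => km.1 * km.2 ^ 2) := by
    intro j hj
    rw [mem_Icc] at hj
    obtain ⟨k, m, hk, hm, rfl, hsf⟩ := Nat.sq_mul_squarefree_of_pos hj.1
    refine mem_image.mpr ⟨(k, m), ?_, mul_comm _ _⟩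
    simp only [T, mem_product, mem_filter, mem_Icc]
    refine ⟨⟨⟨hk, ?_⟩, hsf⟩, hm, ?_⟩ <;> nlinarith [Nat.one_le_pow 2 m hm]
  have hsq (k : ℕ) : ∑ m ∈ Icc 1 M, ((k * m ^ 2 : ℕ) : ℝ)⁻¹ ≤ 2 * (k : ℝ)⁻¹ := by
    have hIcc : Icc 1 M = Ioo 0 (M + 1) := by ext; simp; omega
    have h2 := sum_Ioo_inv_sq_le (α := ℝ) 0 (M + 1)
    simp only [CharP.cast_eq_zero, zero_add, div_one] at h2
    simp only [Nat.cast_mul, Nat.cast_pow, mul_inv, ← mul_sum, hIcc]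
    rw [mul_comm]
    exact mul_le_mul_of_nonneg_right h2 (by positivity)
  calc Real.log (M + 1) ≤ ∑ j ∈ Icc 1 M, (j : ℝ)⁻¹ := by
        simpa [harmonic_eq_sum_Icc] using log_add_one_le_harmonic M
    _ ≤ ∑ j ∈ T.image (fun km : ℕ × ℕ => km.1 * km.2 ^ 2), (j : ℝ)⁻¹ :=
        sum_le_sum_of_subset_of_nonneg hcover fun _ _ _ => by positivity
    _ ≤ ∑ km ∈ T, ((km.1 * km.2 ^ 2 : ℕ) : ℝ)⁻¹ :=
        sum_image_le_of_nonneg fun _ _ => by positivity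
    _ ≤ ∑ k ∈ Icc 1 M with Squarefree k, 2 * (k : ℝ)⁻¹ := by
        rw [sum_product]
        exact sum_le_sum fun k _ => hsq k
    _ = 2 * ∑ k ∈ Icc 1 M with Squarefree k, (k : ℝ)⁻¹ := by rw [mul_sum]

theorem sum_squarefree_sqrt_div_sq_le (H : ℕ) :
    ((∑ k ∈ Icc 1 H with Squarefree k, Nat.sqrt (H / k) ^ 2 : ℕ) : ℝ) ≤
      H * (1 + Real.log H) := by
  push_cast
  calc ∑ k ∈ Icc 1 H with Squarefree k, (Nat.sqrt (H / k) : ℝ) ^ 2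
      ≤ ∑ k ∈ Icc 1 H, (Nat.sqrt (H / k) : ℝ) ^ 2 :=
        sum_le_sum_of_subset_of_nonneg (filter_subset _ _) fun _ _ _ => by positivity
    _ ≤ ∑ k ∈ Icc 1 H, (H : ℝ) * (k : ℝ)⁻¹ := sum_le_sum fun k hk => by
        have hk : (0 : ℝ) < k := by rw [mem_Icc] at hk; exact_mod_cast hk.1
        rw [← div_eq_mul_inv, le_div_iff₀ hk, mul_comm]
        exact_mod_cast Nat.mul_sqrt_div_sq_le H k
    _ = H * harmonic H := by rw [← mul_sum, harmonic_eq_sum_Icc]; push_cast; rfl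
    _ ≤ H * (1 + Real.log H) := by gcongr; exact harmonic_le_one_add_log H

theorem mul_log_add_one_le_sum_squarefree_sqrt_div_sq (H : ℕ) :
    H * Real.log (H + 1) / 16 ≤
      ((∑ k ∈ Icc 1 H with Squarefree k, Nat.sqrt (H / k) ^ 2 : ℕ) : ℝ) := by
  push_cast
  calc H * Real.log (H + 1) / 16
      ≤ H / 8 * ∑ k ∈ Icc 1 H with Squarefree k, (k : ℝ)⁻¹ := by
        have := log_add_one_le_two_mul_sum_squarefree_inv H
        have hH : (0 : ℝ) ≤ H := by positivity
        nlinarith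
    _ = ∑ k ∈ Icc 1 H with Squarefree k, (H : ℝ) / (8 * k) := by
        rw [mul_sum]
        refine sum_congr rfl fun k _ => by ring
    _ ≤ ∑ k ∈ Icc 1 H with Squarefree k, (Nat.sqrt (H / k) : ℝ) ^ 2 :=
        sum_le_sum fun k hk => by
          rw [mem_filter, mem_Icc] at hk
          have hk0 : (0 : ℝ) < k := by exact_mod_cast hk.1.1
          rw [div_le_iff₀ (by positivity)]
          have h8 : (H : ℝ) ≤ 8 * (k * (Nat.sqrt (H / k) : ℝ) ^ 2) := by
            exact_mod_cast Nat.le_eight_mul_mul_sqrt_div_sq hk.1.1 hk.1.2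
          linarith

/-- `R2star H = 2·∑_{k ≤ H squarefree} ⌊√(H/k)⌋²`, and `R2star H ≍ H log H`. -/
theorem count_reducible_degenerate_quadratic_star :
    (∀ H : ℕ, 1 ≤ H →
      R2star H = 2 * ∑ k ∈ Finset.Icc 1 H,
        if Squarefree k then (Nat.sqrt (H / k)) ^ 2 else 0) ∧
    ∃ c₁ c₂ : ℝ, 0 < c₁ ∧ 0 < c₂ ∧ ∀ H : ℕ, 2 ≤ H →
      c₁ * (H : ℝ) * Real.log H ≤ (R2star H : ℝ) ∧
      (R2star H : ℝ) ≤ c₂ * (H : ℝ) * Real.log H := by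
  refine ⟨fun H _ => by rw [R2star_eq_two_mul_sum, sum_filter], 1 / 8, 6, by norm_num,
    by norm_num, fun H hH => ?_⟩
  have hH : (2 : ℝ) ≤ H := by exact_mod_cast hH
  have hlog : 1 / 2 ≤ Real.log H :=
    (Real.log_two_gt_d9.le.trans' (by norm_num)).trans (Real.log_le_log two_pos hH)
  have hlog_succ : Real.log H ≤ Real.log (H + 1) := Real.log_le_log (by linarith) (by linarith)
  have hlower := mul_log_add_one_le_sum_squarefree_sqrt_div_sq H
  have hupper := sum_squarefree_sqrt_div_sq_le H
  rw [R2star_eq_two_mul_sum, Nat.cast_mul, Nat.cast_two]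
  constructor <;> nlinarith
end

section
/- For every integer n ≥ 4 and H ≥ 2, the number of monic degenerate polynomials of degree n and height at most H which have a linear factor over ℚ is O(H^{n-2}), where the implied constant depends only on n. -/
open Polynomial

/-!
A linear factor over `ℚ` of a monic integer polynomial is `X - a` with `a ∈ ℤ`; write
`f = (X - a) h`. Dividing out `X - a` costs a factor `max 1 |a|` in the height, so `h` lies in a
box of side `≍ H / max 1 |a|`. The ratio `ζ` of the two roots of `f` is a root of unity of degree
at most `n²`, hence of bounded order, so it ranges over a fixed finite set. Either one of the two
roots is `a`, and then `h(ζ a) = 0` determines the constant coefficient of `h` from the others; or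
both are roots `y, ζ y` of `h`, and then `y` is a root of `h(X) - h(ζ X)`, which only depends on
the non-constant coefficients of `h`, leaving `≤ n` choices of `h` once those are fixed (when
`h(X) - h(ζ X)` vanishes identically, the linear coefficient of `h` vanishes instead). So for
each `a` there are `O((H / max 1 |a|)^(n-2))` cofactors `h`, and the sum over `a` converges
because `n - 2 ≥ 2`.
-/

open Finset
open scoped Nat

theorem Nat.le_totient_mul_two_pow (m : ℕ) : m ≤ φ m * 2 ^ #m.primeFactors := by
  have hpos : 0 < ∏ p ∈ m.primeFactors, (p - 1) :=
    prod_pos fun p hp => Nat.sub_pos_of_lt (Nat.prime_of_mem_primeFactors hp).one_lt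
  have hprod : ∏ p ∈ m.primeFactors, p ≤ 2 ^ #m.primeFactors * ∏ p ∈ m.primeFactors, (p - 1) := by
    rw [← prod_const, ← prod_mul_distrib]
    exact prod_le_prod' fun p hp => by have := (Nat.prime_of_mem_primeFactors hp).two_le; omega
  refine Nat.le_of_mul_le_mul_right ?_ hpos
  calc m * ∏ p ∈ m.primeFactors, (p - 1) = φ m * ∏ p ∈ m.primeFactors, p :=
        (Nat.totient_mul_prod_primeFactors m).symm
    _ ≤ φ m * (2 ^ #m.primeFactors * ∏ p ∈ m.primeFactors, (p - 1)) := Nat.mul_le_mul_left _ hprod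
    _ = _ := by ring

theorem Nat.le_of_totient_le {m N : ℕ} (hm : 0 < m) (hN : φ m ≤ N) : m ≤ N * 2 ^ (N + 2) := by
  have hsub : m.primeFactors ⊆ range (N + 2) := fun p hp => by
    have hp' := Nat.prime_of_mem_primeFactors hp
    have : φ p ≤ N := (Nat.le_of_dvd (Nat.totient_pos.2 hm)
      (Nat.totient_dvd_of_dvd (Nat.dvd_of_mem_primeFactors hp))).trans hN
    rw [Nat.totient_prime hp'] at this
    exact mem_range.2 (by omega)
  calc m ≤ φ m * 2 ^ #m.primeFactors := m.le_totient_mul_two_pow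
    _ ≤ N * 2 ^ (N + 2) := Nat.mul_le_mul hN <|
        Nat.pow_le_pow_right two_pos ((card_le_card hsub).trans (card_range _).le)

theorem exists_pow_eq_one_of_natDegree_minpoly_le (K : Type*) [Field K] [CharZero K] (N : ℕ) :
    ∃ L, 0 < L ∧ ∀ ζ : K, IsOfFinOrder ζ → (minpoly ℚ ζ).natDegree ≤ N → ζ ^ L = 1 := by
  refine ⟨(N * 2 ^ (N + 2)).factorial, Nat.factorial_pos _, fun ζ hfin hdeg => ?_⟩
  have hprim : IsPrimitiveRoot ζ (orderOf ζ) := IsPrimitiveRoot.orderOf ζ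
  have hminpoly : minpoly ℚ ζ = (minpoly ℤ ζ).map (algebraMap ℤ ℚ) :=
    minpoly.isIntegrallyClosed_eq_field_fractions' ℚ (hprim.isIntegral hfin.orderOf_pos)
  have htot : φ (orderOf ζ) ≤ N := by
    refine hprim.totient_le_degree_minpoly.trans (le_of_eq_of_le ?_ hdeg)
    rw [hminpoly, natDegree_map_eq_of_injective (algebraMap ℤ ℚ).injective_int]
  exact orderOf_dvd_iff_pow_eq_one.1 <|
    Nat.dvd_factorial hfin.orderOf_pos (Nat.le_of_totient_le hfin.orderOf_pos htot)

open IntermediateField in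
theorem natDegree_minpoly_div_le {K L : Type*} [Field K] [Field L] [Algebra K L] {α β : L}
    (hα : IsIntegral K α) (hβ : IsIntegral K β) :
    (minpoly K (α / β)).natDegree ≤ (minpoly K α).natDegree * (minpoly K β).natDegree := by
  have : FiniteDimensional K K⟮α⟯ := adjoin.finiteDimensional hα
  have : FiniteDimensional K K⟮β⟯ := adjoin.finiteDimensional hβ
  have hmem : α / β ∈ K⟮α⟯ ⊔ K⟮β⟯ :=
    div_mem (le_sup_left (α := IntermediateField K L) (mem_adjoin_simple_self K α))
      (le_sup_right (α := IntermediateField K L) (mem_adjoin_simple_self K β))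
  rw [← adjoin.finrank hα, ← adjoin.finrank hβ, ← minpoly_eq ⟨_, hmem⟩]
  exact (minpoly.natDegree_le _).trans (finrank_sup_le _ _)

theorem isIntegral_and_natDegree_minpoly_le {f : ℤ[X]} (hf : f ≠ 0) {α : ℂ}
    (hα : aeval α f = 0) : IsIntegral ℚ α ∧ (minpoly ℚ α).natDegree ≤ f.natDegree := by
  have hmap : f.map (algebraMap ℤ ℚ) ≠ 0 :=
    (Polynomial.map_ne_zero_iff (algebraMap ℤ ℚ).injective_int).2 hf
  have hα' : aeval α (f.map (algebraMap ℤ ℚ)) = 0 := by rwa [aeval_map_algebraMap]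
  exact ⟨isAlgebraic_iff_isIntegral.1 ⟨_, hmap, hα'⟩,
    (natDegree_le_of_dvd (minpoly.dvd ℚ α hα') hmap).trans natDegree_map_le⟩

def ContainsRootRatios (n : ℕ) (Z : Finset ℂ) : Prop :=
  ∀ f : ℤ[X], f ≠ 0 → f.natDegree ≤ n → ∀ α β : ℂ, aeval α f = 0 → aeval β f = 0 →
    IsOfFinOrder (α / β) → α / β ∈ Z

theorem exists_containsRootRatios (n : ℕ) : ∃ Z : Finset ℂ, ContainsRootRatios n Z := by
  obtain ⟨L, hL, hpow⟩ := exists_pow_eq_one_of_natDegree_minpoly_le ℂ (n * n)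
  refine ⟨(nthRoots L (1 : ℂ)).toFinset, fun f hf hdeg α β hα hβ hfin => ?_⟩
  obtain ⟨hαi, hαd⟩ := isIntegral_and_natDegree_minpoly_le hf hα
  obtain ⟨hβi, hβd⟩ := isIntegral_and_natDegree_minpoly_le hf hβ
  rw [Multiset.mem_toFinset, mem_nthRoots hL]
  exact hpow _ hfin <| (natDegree_minpoly_div_le hαi hβi).trans <|
    Nat.mul_le_mul (hαd.trans hdeg) (hβd.trans hdeg)

theorem exists_isRoot_of_linear_dvd {f : ℤ[X]} (hf : f.Monic) {q : ℚ[X]} (hq : q.degree = 1)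
    (hdvd : q ∣ f.map (Int.castRingHom ℚ)) : ∃ a : ℤ, f.IsRoot a := by
  obtain ⟨r, hr⟩ := exists_root_of_degree_eq_one hq
  have hfr : aeval r f = 0 := by
    obtain ⟨g, hg⟩ := hdvd
    rw [aeval_def, eval₂_eq_eval_map, algebraMap_int_eq, hg, eval_mul, hr.eq_zero, zero_mul]
  obtain ⟨a, rfl⟩ := isInteger_of_is_root_of_monic hf hfr
  refine ⟨a, (algebraMap ℤ ℚ).injective_int ?_⟩
  rwa [map_zero, ← coe_aeval_eq_eval, ← aeval_algebraMap_apply]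

theorem exists_eq_X_sub_C_mul_of_linear_dvd {f : ℤ[X]} {m : ℕ} (hmon : f.Monic)
    (hdeg : f.natDegree = m + 1) {q : ℚ[X]} (hq : q.degree = 1)
    (hdvd : q ∣ f.map (Int.castRingHom ℚ)) :
    ∃ a : ℤ, ∃ h : ℤ[X], h.Monic ∧ h.natDegree = m ∧ (X - C a) * h = f := by
  obtain ⟨a, ha⟩ := exists_isRoot_of_linear_dvd hmon hq hdvd
  have hf : (X - C a) * (f /ₘ (X - C a)) = f := mul_divByMonic_eq_iff_isRoot.2 ha
  have hmon' : (f /ₘ (X - C a)).Monic := (monic_X_sub_C a).of_mul_monic_left (hf.symm ▸ hmon)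
  refine ⟨a, _, hmon', ?_, hf⟩
  have := (monic_X_sub_C a).natDegree_mul hmon'
  rw [hf, hdeg, natDegree_X_sub_C] at this
  omega

theorem coeff_X_sub_C_mul_zero (a : ℤ) (h : ℤ[X]) :
    ((X - C a) * h).coeff 0 = -(a * h.coeff 0) := by
  simp [mul_coeff_zero]

theorem coeff_X_sub_C_mul_succ (a : ℤ) (h : ℤ[X]) (j : ℕ) :
    ((X - C a) * h).coeff (j + 1) = h.coeff j - h.coeff (j + 1) * a := by
  rw [mul_comm, coeff_mul_X_sub_C]

section CoeffBounds

variable {a H : ℤ} {h : ℤ[X]}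

theorem abs_coeff_le_of_abs_le_one {m : ℕ} (hdeg : h.natDegree ≤ m) (ha : |a| ≤ 1)
    (hH : ∀ i, |((X - C a) * h).coeff i| ≤ H) (j : ℕ) : |h.coeff j| ≤ (m + 1) * H := by
  suffices hdown : ∀ d j : ℕ, m < j + d → |h.coeff j| ≤ d * H by
    exact_mod_cast hdown (m + 1) j (by omega)
  intro d
  induction d with
  | zero => intro j hj; simp [coeff_eq_zero_of_natDegree_lt (hdeg.trans_lt (by omega : m < j))]
  | succ d ih =>
    intro j hj
    have hrec : h.coeff j = ((X - C a) * h).coeff (j + 1) + h.coeff (j + 1) * a := by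
      rw [coeff_X_sub_C_mul_succ]; ring
    have hnext : |h.coeff (j + 1) * a| ≤ d * H := by
      rw [abs_mul]
      nlinarith [ih (j + 1) (by omega), abs_nonneg (h.coeff (j + 1))]
    calc |h.coeff j| ≤ |((X - C a) * h).coeff (j + 1)| + |h.coeff (j + 1) * a| :=
          hrec ▸ abs_add_le _ _
      _ ≤ ((d + 1 : ℕ) : ℤ) * H := by push_cast; linarith [hH (j + 1)]

theorem abs_mul_abs_coeff_le_of_two_le_abs (ha : 2 ≤ |a|)
    (hH : ∀ i, |((X - C a) * h).coeff i| ≤ H) (j : ℕ) : |a| * |h.coeff j| ≤ 2 * H := by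
  induction j with
  | zero =>
    have := hH 0
    rw [coeff_X_sub_C_mul_zero, abs_neg, abs_mul] at this
    linarith [(abs_nonneg _).trans (hH 0)]
  | succ j ih =>
    have hrec : h.coeff (j + 1) * a = h.coeff j - ((X - C a) * h).coeff (j + 1) := by
      rw [coeff_X_sub_C_mul_succ]; ring
    have hprev : |h.coeff j| ≤ H := by nlinarith [abs_nonneg (h.coeff j)]
    calc |a| * |h.coeff (j + 1)| = |h.coeff j - ((X - C a) * h).coeff (j + 1)| := by
          rw [← hrec, abs_mul, mul_comm]
      _ ≤ 2 * H := (abs_sub _ _).trans (by linarith [hH (j + 1)])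

theorem abs_coeff_mul_max_le {m : ℕ} (hdeg : h.natDegree ≤ m)
    (hH : ∀ i, |((X - C a) * h).coeff i| ≤ H) (j : ℕ) :
    |h.coeff j| * max 1 |a| ≤ 2 * (m + 1) * H := by
  have hH0 : 0 ≤ H := (abs_nonneg _).trans (hH 0)
  rcases le_or_gt |a| 1 with ha | ha
  · rw [max_eq_left ha, mul_one]
    nlinarith [abs_coeff_le_of_abs_le_one hdeg ha hH j]
  · rw [max_eq_right ha.le, mul_comm]
    nlinarith [abs_mul_abs_coeff_le_of_two_le_abs (show 2 ≤ |a| by omega) hH j]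

end CoeffBounds

theorem Polynomial.Monic.eq_of_natDegree_eq_of_coeff_eq {R : Type*} [Semiring R] {p q : R[X]}
    (hp : p.Monic) (hq : q.Monic) (hdeg : p.natDegree = q.natDegree)
    (hcoeff : ∀ i < p.natDegree, p.coeff i = q.coeff i) : p = q := by
  rw [hp.as_sum, hq.as_sum, ← hdeg]
  congr 1
  exact sum_congr rfl fun i hi => by rw [hcoeff i (mem_range.1 hi)]

theorem Polynomial.eq_of_divX_eq_of_aeval_eq_zero {R A : Type*} [CommRing R] [CommRing A]
    [Algebra R A] [FaithfulSMul R A] {p q : R[X]} {w : A} (hpq : p.divX = q.divX)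
    (hp : aeval w p = 0) (hq : aeval w q = 0) : p = q := by
  have hsplit (r : R[X]) : aeval w r = aeval w r.divX * w + algebraMap R A (r.coeff 0) := by
    conv_lhs => rw [← divX_mul_X_add r]
    simp
  have hcoeff : p.coeff 0 = q.coeff 0 := FaithfulSMul.algebraMap_injective R A <| by
    linear_combination hsplit q - hsplit p + hp - hq - congrArg (aeval w · * w) hpq
  rw [← divX_mul_X_add p, ← divX_mul_X_add q, hpq, hcoeff]

section MonicBox

variable {d T : ℕ} {h : ℤ[X]}

theorem coeff_mem_piFinset_Icc (hh : ∀ i < d, |h.coeff i| ≤ T) :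
    (fun i : Fin d => h.coeff i) ∈ Fintype.piFinset fun _ => Icc (-(T : ℤ)) T :=
  Fintype.mem_piFinset.2 fun i => mem_Icc.2 (abs_le.1 (hh i i.2))

theorem finite_setOf_monic_natDegree_eq_abs_coeff_le (d T : ℕ) :
    {h : ℤ[X] | h.Monic ∧ h.natDegree = d ∧ ∀ i < d, |h.coeff i| ≤ T}.Finite :=
  Set.Finite.of_injOn (fun _ hh => coeff_mem_piFinset_Icc hh.2.2)
    (fun _ ⟨hp, hpd, _⟩ _ ⟨hq, hqd, _⟩ hpq => hp.eq_of_natDegree_eq_of_coeff_eq hq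
      (hpd.trans hqd.symm) fun i hi => congrFun hpq ⟨i, hpd ▸ hi⟩)
    (Finset.finite_toSet _)

noncomputable def monicBox (d T : ℕ) : Finset ℤ[X] :=
  (finite_setOf_monic_natDegree_eq_abs_coeff_le d T).toFinset

theorem mem_monicBox :
    h ∈ monicBox d T ↔ h.Monic ∧ h.natDegree = d ∧ ∀ i < d, |h.coeff i| ≤ T :=
  Set.Finite.mem_toFinset _

theorem card_monicBox_le : #(monicBox d T) ≤ (2 * T + 1) ^ d := by
  refine (card_le_card_of_injOn (fun h (i : Fin d) => h.coeff i)
    (fun h hh => coeff_mem_piFinset_Icc (mem_monicBox.1 hh).2.2) fun p hp q hq hpq => ?_).trans ?_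
  · obtain ⟨hp, hpd, -⟩ := mem_monicBox.1 hp
    obtain ⟨hq, hqd, -⟩ := mem_monicBox.1 hq
    exact hp.eq_of_natDegree_eq_of_coeff_eq hq (hpd.trans hqd.symm) fun i hi =>
      congrFun hpq ⟨i, hpd ▸ hi⟩
  · rw [Fintype.card_piFinset, prod_const, card_univ, Fintype.card_fin, Int.card_Icc]
    exact le_of_eq (by congr 1; omega)

theorem divX_mem_monicBox (hh : h ∈ monicBox (d + 1) T) : h.divX ∈ monicBox d T := by
  obtain ⟨hmon, hdeg, hcoeff⟩ := mem_monicBox.1 hh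
  have hdeg' : h.divX.natDegree = d := by rw [natDegree_divX_eq_natDegree_tsub_one, hdeg]; rfl
  refine mem_monicBox.2 ⟨?_, hdeg', fun i hi => ?_⟩
  · rw [Monic, leadingCoeff, hdeg', coeff_divX, ← hdeg]
    exact hmon
  · rw [coeff_divX]
    exact hcoeff (i + 1) (by omega)

theorem card_le_of_forall_aeval_eq_zero {s : Finset ℤ[X]} {w : ℂ} (hs : s ⊆ monicBox (d + 1) T)
    (hw : ∀ h ∈ s, aeval w h = 0) : #s ≤ (2 * T + 1) ^ d :=
  (card_le_card_of_injOn divX (fun _ hh => divX_mem_monicBox (hs hh))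
    fun p hp q hq hpq => eq_of_divX_eq_of_aeval_eq_zero hpq (hw p hp) (hw q hq)).trans
    card_monicBox_le

end MonicBox

section RootPairs

variable {R : Type*} [CommRing R]

noncomputable def dilationDiff (ζ : R) (p : R[X]) : R[X] := p - p.comp (C ζ * X)

theorem eval_dilationDiff (ζ y : R) (p : R[X]) :
    (dilationDiff ζ p).eval y = p.eval y - p.eval (ζ * y) := by
  simp [dilationDiff]

theorem coeff_dilationDiff (ζ : R) (p : R[X]) (i : ℕ) :
    (dilationDiff ζ p).coeff i = p.coeff i * (1 - ζ ^ i) := by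
  simp [dilationDiff, mul_sub]

theorem natDegree_dilationDiff_le (ζ : R) (p : R[X]) :
    (dilationDiff ζ p).natDegree ≤ p.natDegree :=
  natDegree_le_iff_coeff_eq_zero.2 fun i hi => by
    rw [coeff_dilationDiff, coeff_eq_zero_of_natDegree_lt (by exact_mod_cast hi), zero_mul]

theorem eval_dilationDiff_map_X_mul_divX (ζ y : ℂ) (h : ℤ[X]) :
    (dilationDiff ζ ((X * h.divX).map (Int.castRingHom ℂ))).eval y =
      aeval y h - aeval (ζ * y) h := by
  rw [eval_dilationDiff, ← sub_eq_of_eq_add (X_mul_divX_add h).symm]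
  simp only [Polynomial.map_sub, eval_sub, map_C, eval_C, ← algebraMap_int_eq,
    eval_map_algebraMap]
  ring

theorem coeff_zero_eq_zero_of_dilationDiff_eq_zero {ζ : ℂ} (hζ : ζ ≠ 1) {g : ℤ[X]}
    (hg : dilationDiff ζ ((X * g).map (Int.castRingHom ℂ)) = 0) : g.coeff 0 = 0 := by
  have h1 := congrArg (coeff · 1) hg
  simp only [coeff_dilationDiff, coeff_map, coeff_X_mul, pow_one, coeff_zero, mul_eq_zero,
    sub_eq_zero, eq_comm (a := (1 : ℂ)), hζ, or_false] at h1
  exact (Int.castRingHom ℂ).injective_int (h1.trans (map_zero _).symm)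

end RootPairs

section Counting

variable {d T : ℕ}

theorem card_le_of_divX_eq {s : Finset ℤ[X]} {g : ℤ[X]}
    (hs : ∀ h ∈ s, h.divX = g ∧ |h.coeff 0| ≤ T) : #s ≤ 2 * T + 1 := by
  refine (card_le_card_of_injOn (fun h => h.coeff 0) (t := Icc (-(T : ℤ)) T)
    (fun h hh => mem_Icc.2 (abs_le.1 (hs h hh).2)) fun p hp q hq hpq => ?_).trans ?_
  · rw [← divX_mul_X_add p, ← divX_mul_X_add q, (hs p hp).1, (hs q hq).1]
    exact congrArg (fun c => g * X + C c) hpq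
  · rw [Int.card_Icc]; omega

/-- Every `h` in a fibre `divX h = g` satisfies `h(y) - h(ζ y) = (dilationDiff ζ (X * g))(y)`, so
the first entry `y` of a root pair `(y, ζ y)` of `h` is a root of this common polynomial, and `y`
determines `h`. -/
theorem card_le_of_divX_eq_of_root_pair {s : Finset ℤ[X]} {ζ : ℂ} {g : ℤ[X]}
    (hg : dilationDiff ζ ((X * g).map (Int.castRingHom ℂ)) ≠ 0)
    (hs : ∀ h ∈ s, h.divX = g ∧ ∃ y : ℂ, aeval y h = 0 ∧ aeval (ζ * y) h = 0) :
    #s ≤ g.natDegree + 1 := by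
  classical
  choose! y hy using fun h hh => (hs h hh).2
  set P := dilationDiff ζ ((X * g).map (Int.castRingHom ℂ)) with hP
  have hmaps : ∀ h ∈ s, y h ∈ P.roots.toFinset := by
    intro h hh
    rw [Multiset.mem_toFinset, mem_roots hg, IsRoot, hP, ← (hs h hh).1,
      eval_dilationDiff_map_X_mul_divX, (hy h hh).1, (hy h hh).2, sub_zero]
  have hinj : Set.InjOn y s := by
    intro p hp q hq hpq
    refine eq_of_divX_eq_of_aeval_eq_zero ((hs p hp).1.trans (hs q hq).1.symm) (hy p hp).1 ?_
    exact hpq ▸ (hy q hq).1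
  have hdeg : #P.roots.toFinset ≤ g.natDegree + 1 :=
    calc _ ≤ P.natDegree := (Multiset.toFinset_card_le _).trans (card_roots' _)
      _ ≤ (X * g).natDegree := (natDegree_dilationDiff_le _ _).trans natDegree_map_le
      _ ≤ g.natDegree + 1 := natDegree_mul_le.trans (by rw [natDegree_X, add_comm])
  exact (card_le_card_of_injOn y hmaps hinj).trans hdeg

theorem card_le_of_forall_root_pair {s : Finset ℤ[X]} {ζ : ℂ} (hζ : ζ ≠ 1)
    (hs : s ⊆ monicBox (d + 2) T)
    (hpair : ∀ h ∈ s, ∃ y : ℂ, aeval y h = 0 ∧ aeval (ζ * y) h = 0) :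
    #s ≤ (d + 3) * (2 * T + 1) ^ (d + 1) := by
  classical
  set P : ℤ[X] → ℂ[X] := fun g => dilationDiff ζ ((X * g).map (Int.castRingHom ℂ))
  have hgeneric : #{h ∈ s | P h.divX ≠ 0} ≤ (d + 2) * (2 * T + 1) ^ (d + 1) := by
    refine (card_le_mul_card_image_of_maps_to (f := divX)
      (t := {g ∈ monicBox (d + 1) T | P g ≠ 0}) (fun h hh => ?_) _ fun g hg => ?_).trans
      (Nat.mul_le_mul_left _ ?_)
    · obtain ⟨hhs, hP⟩ := mem_filter.1 hh
      exact mem_filter.2 ⟨divX_mem_monicBox (hs hhs), hP⟩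
    · obtain ⟨hgbox, hP⟩ := mem_filter.1 hg
      refine (card_le_of_divX_eq_of_root_pair hP fun h hh => ?_).trans ?_
      · obtain ⟨hhs, hdivX⟩ := mem_filter.1 hh
        exact ⟨hdivX, hpair h (mem_filter.1 hhs).1⟩
      · rw [(mem_monicBox.1 hgbox).2.1]
    · exact (card_filter_le _ _).trans card_monicBox_le
  have hdegenerate : #{h ∈ s | ¬P h.divX ≠ 0} ≤ (2 * T + 1) * (2 * T + 1) ^ d := by
    refine (card_le_mul_card_image_of_maps_to (f := divX)
      (t := {g ∈ monicBox (d + 1) T | aeval (0 : ℂ) g = 0}) (fun h hh => ?_) _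
      fun g hg => ?_).trans
      (Nat.mul_le_mul_left _ (card_le_of_forall_aeval_eq_zero (filter_subset _ _)
        fun g hg => (mem_filter.1 hg).2))
    · obtain ⟨hhs, hP⟩ := mem_filter.1 hh
      refine mem_filter.2 ⟨divX_mem_monicBox (hs hhs), ?_⟩
      rw [← coeff_zero_eq_aeval_zero', coeff_zero_eq_zero_of_dilationDiff_eq_zero hζ (not_not.1 hP),
        map_zero]
    · refine card_le_of_divX_eq (g := g) fun h hh => ?_
      obtain ⟨hhs, hdivX⟩ := mem_filter.1 hh
      exact ⟨hdivX, (mem_monicBox.1 (hs (mem_filter.1 hhs).1)).2.2 0 (by omega)⟩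
  calc #s = #{h ∈ s | P h.divX ≠ 0} + #{h ∈ s | ¬P h.divX ≠ 0} :=
        (card_filter_add_card_filter_not _).symm
    _ ≤ (d + 2) * (2 * T + 1) ^ (d + 1) + (2 * T + 1) * (2 * T + 1) ^ d :=
        add_le_add hgeneric hdegenerate
    _ = (d + 3) * (2 * T + 1) ^ (d + 1) := by ring

end Counting

open Classical in
noncomputable def degenerateCofactors (Z : Finset ℂ) (a : ℤ) (d T : ℕ) : Finset ℤ[X] :=
  Z.biUnion (fun ζ => {h ∈ monicBox d T | aeval (ζ * a) h = 0}) ∪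
    (Z.erase 1).biUnion fun ζ =>
      {h ∈ monicBox d T | ∃ y : ℂ, aeval y h = 0 ∧ aeval (ζ * y) h = 0}

theorem card_degenerateCofactors_le (Z : Finset ℂ) (a : ℤ) (d T : ℕ) :
    #(degenerateCofactors Z a (d + 2) T) ≤ #Z * (d + 4) * (2 * T + 1) ^ (d + 1) := by
  classical
  calc _ ≤ ∑ _ ∈ Z, (2 * T + 1) ^ (d + 1) + ∑ _ ∈ Z.erase 1, (d + 3) * (2 * T + 1) ^ (d + 1) := by
        refine (card_union_le _ _).trans (add_le_add ?_ ?_) <;>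
          refine card_biUnion_le.trans (sum_le_sum fun ζ hζ => ?_)
        · exact card_le_of_forall_aeval_eq_zero (filter_subset _ _) fun h hh => (mem_filter.1 hh).2
        · exact card_le_of_forall_root_pair (ne_of_mem_erase hζ) (filter_subset _ _)
            fun h hh => (mem_filter.1 hh).2
    _ ≤ #Z * (2 * T + 1) ^ (d + 1) + #Z * ((d + 3) * (2 * T + 1) ^ (d + 1)) := by
        rw [sum_const, sum_const, smul_eq_mul, smul_eq_mul]
        exact Nat.add_le_add_left (Nat.mul_le_mul_right _ (card_erase_le (s := Z) (a := 1))) _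
    _ = #Z * (d + 4) * (2 * T + 1) ^ (d + 1) := by ring

theorem aeval_X_sub_C_mul (γ : ℂ) (a : ℤ) (h : ℤ[X]) :
    aeval γ ((X - C a) * h) = (γ - a) * aeval γ h := by
  simp

theorem mem_degenerateCofactors {Z : Finset ℂ} {a : ℤ} {d T : ℕ} {h : ℤ[X]}
    (hh : h ∈ monicBox d T) (hdeg : IsDegenerate ((X - C a) * h))
    (hZ : ∀ α β : ℂ, aeval α ((X - C a) * h) = 0 → aeval β ((X - C a) * h) = 0 →
      IsOfFinOrder (α / β) → α / β ∈ Z) :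
    h ∈ degenerateCofactors Z a d T := by
  classical
  obtain ⟨α, β, hα, hβ, hne, k, hk, hpow⟩ := hdeg
  have hβ0 : β ≠ 0 := by rintro rfl; simp [zero_pow hk.ne'] at hpow
  have hα0 : α ≠ 0 := by rintro rfl; simp [zero_pow hk.ne'] at hpow
  have hfin : IsOfFinOrder (α / β) := isOfFinOrder_iff_pow_eq_one.2 ⟨k, hk, hpow⟩
  have hroot {γ : ℂ} (hγ : aeval γ ((X - C a) * h) = 0) : γ = a ∨ aeval γ h = 0 := by
    rw [aeval_X_sub_C_mul, mul_eq_zero, sub_eq_zero] at hγ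
    exact hγ
  simp only [degenerateCofactors, mem_union, mem_biUnion, mem_filter, mem_erase]
  rcases hroot hα with rfl | hαh <;> rcases hroot hβ with rfl | hβh
  · exact absurd rfl hne
  · refine Or.inl ⟨β / a, hZ _ _ hβ hα
      (isOfFinOrder_iff_pow_eq_one.2 ⟨k, hk, by rw [← inv_div, inv_pow, hpow, inv_one]⟩), hh, ?_⟩
    rwa [div_mul_cancel₀ _ hα0]
  · refine Or.inl ⟨α / a, hZ _ _ hα hβ hfin, hh, ?_⟩
    rwa [div_mul_cancel₀ _ hβ0]
  · refine Or.inr ⟨α / β, ⟨fun h1 => hne ((div_eq_one_iff_eq hβ0).1 h1), hZ _ _ hα hβ hfin⟩, hh,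
      β, hβh, ?_⟩
    rwa [div_mul_cancel₀ _ hβ0]

theorem Nat.two_mul_div_add_one_pow_mul_sq_le {B k e : ℕ} (hk : 0 < k) (hkB : k ≤ B) (he : 2 ≤ e) :
    (2 * (B / k) + 1) ^ e * k ^ 2 ≤ (3 * B) ^ e :=
  calc (2 * (B / k) + 1) ^ e * k ^ 2 ≤ (2 * (B / k) + 1) ^ e * k ^ e :=
        Nat.mul_le_mul_left _ (Nat.pow_le_pow_right hk he)
    _ = (2 * (B / k) * k + k) ^ e := by rw [← mul_pow, add_mul, one_mul]
    _ ≤ (3 * B) ^ e := Nat.pow_le_pow_left (by nlinarith [Nat.div_mul_le_self B k]) e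

theorem summable_inv_sq_max_one_natAbs :
    Summable fun a : ℤ => (((max 1 a.natAbs : ℕ) : ℝ) ^ 2)⁻¹ := by
  refine .of_norm_bounded_eventually (Real.summable_one_div_int_pow.2 one_lt_two) ?_
  filter_upwards [Filter.eventually_cofinite_ne 0] with a ha
  rw [max_eq_right (Int.natAbs_pos.2 ha), Real.norm_of_nonneg (by positivity), one_div]
  simp

theorem sum_Icc_pow_div_le_tsum {B e : ℕ} (hB : 0 < B) (he : 2 ≤ e) :
    ∑ a ∈ Icc (-(B : ℤ)) B, (((2 * (B / max 1 a.natAbs) + 1) ^ e : ℕ) : ℝ) ≤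
      (3 * B) ^ e * ∑' a : ℤ, (((max 1 a.natAbs : ℕ) : ℝ) ^ 2)⁻¹ := by
  have hterm : ∀ a ∈ Icc (-(B : ℤ)) B, (((2 * (B / max 1 a.natAbs) + 1) ^ e : ℕ) : ℝ) ≤
      (3 * B) ^ e * (((max 1 a.natAbs : ℕ) : ℝ) ^ 2)⁻¹ := fun a ha => by
    have hkB : max 1 a.natAbs ≤ B := max_le hB (by have := mem_Icc.1 ha; omega)
    rw [le_mul_inv_iff₀ (by positivity)]
    exact_mod_cast Nat.two_mul_div_add_one_pow_mul_sq_le (by positivity) hkB he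
  calc _ ≤ ∑ a ∈ Icc (-(B : ℤ)) B, (3 * B) ^ e * (((max 1 a.natAbs : ℕ) : ℝ) ^ 2)⁻¹ :=
        sum_le_sum hterm
    _ ≤ (3 * B) ^ e * ∑' a : ℤ, (((max 1 a.natAbs : ℕ) : ℝ) ^ 2)⁻¹ := by
        rw [← mul_sum]
        gcongr
        exact summable_inv_sq_max_one_natAbs.sum_le_tsum _ fun _ _ => by positivity

def monicDegenerateWithLinearFactor (n H : ℕ) : Set ℤ[X] :=
  {f : ℤ[X] | f.Monic ∧ f.natDegree = n ∧ IsDegenerate f ∧ (∀ i, |f.coeff i| ≤ (H : ℤ)) ∧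
    ∃ q : ℚ[X], q.degree = 1 ∧ q ∣ f.map (Int.castRingHom ℚ)}

theorem monicDegenerateWithLinearFactor_subset {Z : Finset ℂ} {m H B : ℕ}
    (hZ : ContainsRootRatios (m + 1) Z) (hB : 2 * (m + 1) * H ≤ B) :
    monicDegenerateWithLinearFactor (m + 1) H ⊆
      ↑((Icc (-(B : ℤ)) B).biUnion fun a =>
        (degenerateCofactors Z a m (B / max 1 a.natAbs)).image ((X - C a) * ·)) := by
  rintro f ⟨hmon, hdeg, hdegen, hH, q, hq, hdvd⟩
  obtain ⟨a, h, hhmon, hhdeg, rfl⟩ := exists_eq_X_sub_C_mul_of_linear_dvd hmon hdeg hq hdvd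
  have hcoeff (j : ℕ) : |h.coeff j| * (max 1 a.natAbs : ℕ) ≤ B := by
    push_cast
    exact (abs_coeff_mul_max_le hhdeg.le hH j).trans (by exact_mod_cast hB)
  have haB : a.natAbs ≤ B := by
    have := hcoeff m
    rw [← hhdeg, hhmon.coeff_natDegree, abs_one, one_mul] at this
    exact (le_max_right _ _).trans (by exact_mod_cast this)
  have hbox : h ∈ monicBox m (B / max 1 a.natAbs) := by
    refine mem_monicBox.2 ⟨hhmon, hhdeg, fun i _ => ?_⟩
    rw [Int.natCast_div, Int.le_ediv_iff_mul_le (by positivity)]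
    exact hcoeff i
  simp only [coe_biUnion, coe_Icc, Set.mem_iUnion, coe_image]
  exact ⟨a, ⟨by omega, by omega⟩, h, mem_degenerateCofactors hbox hdegen
    (hZ _ hmon.ne_zero hdeg.le), rfl⟩

theorem ncard_monicDegenerateWithLinearFactor_le {Z : Finset ℂ} {d H B : ℕ}
    (hZ : ContainsRootRatios (d + 3) Z) (hB : 2 * (d + 3) * H ≤ B) :
    (monicDegenerateWithLinearFactor (d + 3) H).ncard ≤
      ∑ a ∈ Icc (-(B : ℤ)) B, #Z * (d + 4) * (2 * (B / max 1 a.natAbs) + 1) ^ (d + 1) := by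
  refine (Set.ncard_le_ncard (monicDegenerateWithLinearFactor_subset hZ hB)
    (finite_toSet _)).trans ?_
  rw [Set.ncard_coe_finset]
  exact card_biUnion_le.trans <| sum_le_sum fun a _ =>
    card_image_le.trans (card_degenerateCofactors_le Z a d _)

/-- For fixed `n ≥ 4`, the number of monic degenerate integer polynomials of degree `n`
and height at most `H` having a linear factor over `ℚ` is `O(H^{n-2})`. -/
theorem degenerate_with_linear_factor_upper (n : ℕ) (hn : 4 ≤ n) :
    ∃ C : ℝ, 0 < C ∧ ∀ H : ℕ, 2 ≤ H →
      ({f : Polynomial ℤ | f.Monic ∧ f.natDegree = n ∧ IsDegenerate f ∧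
          (∀ i, |f.coeff i| ≤ (H : ℤ)) ∧
          ∃ q : Polynomial ℚ, q.degree = 1 ∧ q ∣ f.map (Int.castRingHom ℚ)}.ncard : ℝ) ≤
        C * (H : ℝ) ^ (n - 2) := by
  obtain ⟨d, rfl⟩ : ∃ d, n = d + 4 := ⟨n - 4, by omega⟩
  obtain ⟨Z, hZ⟩ := exists_containsRootRatios (d + 4)
  set W := ∑' a : ℤ, (((max 1 a.natAbs : ℕ) : ℝ) ^ 2)⁻¹
  have hW : 0 < W := summable_inv_sq_max_one_natAbs.tsum_pos (fun _ => by positivity) 0 (by simp)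
  -- `#Z + 1` rather than `#Z` keeps the constant positive if `Z` is empty
  refine ⟨(#Z + 1) * (d + 5) * (6 * (d + 4)) ^ (d + 2) * W, by positivity, fun H _ => ?_⟩
  set B := 2 * (d + 4) * H
  have hcount := ncard_monicDegenerateWithLinearFactor_le (d := d + 1) (B := B) hZ le_rfl
  calc _ ≤ ∑ a ∈ Icc (-(B : ℤ)) B,
        ((#Z * (d + 5) * (2 * (B / max 1 a.natAbs) + 1) ^ (d + 2) : ℕ) : ℝ) := by
        exact_mod_cast hcount
    _ = #Z * (d + 5) *
          ∑ a ∈ Icc (-(B : ℤ)) B, (((2 * (B / max 1 a.natAbs) + 1) ^ (d + 2) : ℕ) : ℝ) := by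
        rw [mul_sum]; push_cast; rfl
    _ ≤ (#Z + 1) * (d + 5) * ((3 * B) ^ (d + 2) * W) := by
        gcongr
        · linarith
        · exact sum_Icc_pow_div_le_tsum (by positivity) (by omega)
    _ = _ := by
        rw [show (3 * B : ℝ) = 6 * (d + 4) * H by simp only [B]; push_cast; ring, mul_pow,
          show d + 4 - 2 = d + 2 by omega]
        ring
end
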